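/- arXiv:2511.12800 — 3 statements merged into one kernel-verified Lean document; each statement's English description precedes it below -/
import Mathlib

section
/- Let μ_n, μ be probability measures on [0,1]² such that μ_n converges weakly to μ and the marginals of μ are continuous. Then for every permutation τ ∈ S_k, the pattern density t(τ, μ_n) = μ_n^k(A_τ) converges to t(τ, μ) = μ^k(A_τ). -/
open MeasureTheory Set Filter
open scoped ENNReal

/-- Joint distribution function of a measure on the plane. -/
noncomputable def jointCDF (μ : Measure (ℝ × ℝ)) (x y : ℝ) : ℝ :=
  (μ {p | p.1 ≤ x ∧ p.2 ≤ y}).toReal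

/-- First (x-) marginal distribution function. -/
noncomputable def margX (μ : Measure (ℝ × ℝ)) (x : ℝ) : ℝ := (μ {p | p.1 ≤ x}).toReal

/-- Second (y-) marginal distribution function. -/
noncomputable def margY (μ : Measure (ℝ × ℝ)) (y : ℝ) : ℝ := (μ {p | p.2 ≤ y}).toReal

/-- A `lam`-permuton: probability measure on `[0,lam] × [0,1]` with uniform first
marginal on `[0,lam]` and second marginal Lipschitz with constant `1/lam`. -/
structure IsGenPermuton (lam : ℝ) (μ : Measure (ℝ × ℝ)) : Prop where
  lam_pos : 0 < lam
  lam_le : lam ≤ 1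
  prob : IsProbabilityMeasure μ
  supp : μ ((Set.Icc 0 lam ×ˢ Set.Icc (0:ℝ) 1)ᶜ) = 0
  unif_margX : ∀ x ∈ Set.Icc (0:ℝ) lam, margX μ x = x / lam
  lip_margY : ∀ a b : ℝ, 0 ≤ a → a ≤ b → b ≤ 1 → margY μ b - margY μ a ≤ (b - a) / lam

/-- The set of `k`-tuples of points in the plane realizing the pattern of `τ`:
there is an ordering `ρ` of the points which is strictly increasing in the first
coordinate, and the point with `i`-th smallest first coordinate has the `τ i`-th
smallest second coordinate. -/
def patternSet {k : ℕ} (τ : Equiv.Perm (Fin k)) : Set (Fin k → ℝ × ℝ) :=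
  {p | ∃ ρ : Equiv.Perm (Fin k), StrictMono (fun i => (p (ρ i)).1) ∧
    StrictMono (fun j => (p (ρ (τ⁻¹ j))).2)}

/-- `t(τ, μ)`: the probability that a `k`-point i.i.d. sample from `μ`
realizes the pattern `τ`. -/
noncomputable def patternDensity {k : ℕ} (τ : Equiv.Perm (Fin k)) (μ : Measure (ℝ × ℝ)) : ℝ :=
  ((Measure.pi fun _ : Fin k => μ) (patternSet τ)).toReal

/-- `d_∞`: sup distance of the joint distribution functions over the unit square. -/
noncomputable def dInf (μ₁ μ₂ : Measure (ℝ × ℝ)) : ℝ :=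
  sSup {d | ∃ x ∈ Set.Icc (0:ℝ) 1, ∃ y ∈ Set.Icc (0:ℝ) 1,
    d = |jointCDF μ₁ x y - jointCDF μ₂ x y|}

/-- `d_□`: rectangular distance over rectangles contained in the unit square. -/
noncomputable def dRect (μ₁ μ₂ : Measure (ℝ × ℝ)) : ℝ :=
  sSup {d | ∃ x₁ x₂ y₁ y₂ : ℝ, 0 ≤ x₁ ∧ x₁ ≤ x₂ ∧ x₂ ≤ 1 ∧ 0 ≤ y₁ ∧ y₁ ≤ y₂ ∧ y₂ ≤ 1 ∧
    d = |(μ₁ (Set.Icc x₁ x₂ ×ˢ Set.Icc y₁ y₂)).toReal -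
         (μ₂ (Set.Icc x₁ x₂ ×ˢ Set.Icc y₁ y₂)).toReal|}

/-- The generalized permuton associated to an ordered selection `ν : Fin m → Fin n`
(0-indexed): density `n²/m` on each square `[h/n,(h+1)/n) × [ν(h)/n,(ν(h)+1)/n)`. -/
noncomputable def selPermuton (n m : ℕ) (ν : Fin m → Fin n) : Measure (ℝ × ℝ) :=
  volume.withDensity (fun p =>
    if ∃ h : Fin m, (h : ℝ)/n ≤ p.1 ∧ p.1 < ((h : ℝ)+1)/n ∧
        (ν h : ℝ)/n ≤ p.2 ∧ p.2 < ((ν h : ℝ)+1)/n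
    then ENNReal.ofReal ((n:ℝ)^2 / m) else 0)

/-- Combinatorial pattern density `t(τ, ν) = Γ(τ,ν) / C(m,k)`. -/
noncomputable def combDensity {n m k : ℕ} (τ : Equiv.Perm (Fin k)) (ν : Fin m → Fin n) : ℝ :=
  (Nat.card {x : Fin k → Fin m // StrictMono x ∧ ∀ i j, ν (x i) < ν (x j) ↔ τ i < τ j} : ℝ)
    / (m.choose k)

/-- Weak convergence of a sequence of measures on the plane. -/
def WeakConv (μs : ℕ → Measure (ℝ × ℝ)) (μ : Measure (ℝ × ℝ)) : Prop :=
  ∀ f : BoundedContinuousFunction (ℝ × ℝ) ℝ,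
    Filter.Tendsto (fun n => ∫ p, f p ∂(μs n)) Filter.atTop (nhds (∫ p, f p ∂μ))

/-- The `q`-quantile of a 1-dim continuous distribution function `F`. -/
noncomputable def quantile (F : ℝ → ℝ) (q : ℝ) : ℝ := sSup {x | F x = q}

/-- The x-grid `0 = x₀ < x₁ < ⋯ < x_k = lam` of the `k`-subdivision of a
`lam`-permuton `μ`, where `x_i` is the `(i/k)`-quantile of the first marginal. -/
noncomputable def gridX (μ : Measure (ℝ × ℝ)) (lam : ℝ) (k : ℕ) (i : ℕ) : ℝ :=
  if i = 0 then 0 else if i = k then lam else quantile (margX μ) ((i : ℝ)/k)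

/-- The y-grid `0 = y₀ < y₁ < ⋯ < y_k = 1` of quantiles of the second marginal. -/
noncomputable def gridY (μ : Measure (ℝ × ℝ)) (k : ℕ) (j : ℕ) : ℝ :=
  if j = 0 then 0 else if j = k then 1 else quantile (margY μ) ((j : ℝ)/k)

/-- The measure `μ_σ` of Definition 3: mass `1/k` distributed uniformly on each
rectangle `R_{i, σ(i)}` of the `k`-quantile grid subdivision of `μ`. -/
noncomputable def subdivMeasure (μ : Measure (ℝ × ℝ)) (lam : ℝ) (k : ℕ)
    (σ : Equiv.Perm (Fin k)) : Measure (ℝ × ℝ) :=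
  ∑ i : Fin k, ((k : ℝ≥0∞))⁻¹ •
    ProbabilityTheory.uniformOn
      (Set.Ico (gridX μ lam k i) (gridX μ lam k (i+1)) ×ˢ
       Set.Ico (gridY μ k (σ i : ℕ)) (gridY μ k ((σ i : ℕ)+1)))


section Stmt7Aux

open Topology

/-- Continuity of the x-marginal CDF implies vertical lines are null. -/
lemma stmt7_null_line_x (μ : Measure (ℝ × ℝ)) [IsProbabilityMeasure μ]
    (hx : Continuous (margX μ)) (a : ℝ) : μ {p | p.1 = a} = 0 := by
  have key : ∀ ε : ℝ, 0 < ε → (μ {p | p.1 = a}).toReal ≤ margX μ a - margX μ (a - ε) := by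
    intro ε hε
    have hsub : {p : ℝ × ℝ | p.1 = a} ⊆ {p | p.1 ≤ a} \ {p | p.1 ≤ a - ε} := by
      intro p hp
      simp only [mem_setOf_eq] at hp
      constructor
      · simp [hp]
      · simp [hp]; linarith
    have hmono := measure_mono (μ := μ) hsub
    have hdiff : μ ({p : ℝ × ℝ | p.1 ≤ a} \ {p | p.1 ≤ a - ε}) =
        μ {p | p.1 ≤ a} - μ {p | p.1 ≤ a - ε} := by
      apply measure_diff
      · intro p hp; simp only [mem_setOf_eq] at *; linarith
      · exact (measurableSet_le (measurable_fst) measurable_const).nullMeasurableSet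
      · exact measure_ne_top _ _
    rw [hdiff] at hmono
    have h1 := measure_ne_top μ {p : ℝ×ℝ | p.1 ≤ a}
    have hle : μ {p : ℝ×ℝ | p.1 ≤ a - ε} ≤ μ {p : ℝ×ℝ | p.1 ≤ a} :=
      measure_mono (by intro p hp; simp only [mem_setOf_eq] at *; linarith)
    calc (μ {p | p.1 = a}).toReal ≤ (μ {p : ℝ×ℝ | p.1 ≤ a} - μ {p | p.1 ≤ a - ε}).toReal :=
          ENNReal.toReal_mono (by simp [ENNReal.sub_ne_top h1]) hmono
      _ = margX μ a - margX μ (a - ε) := by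
          rw [ENNReal.toReal_sub_of_le hle h1]; rfl
  have h0 : (μ {p : ℝ×ℝ | p.1 = a}).toReal ≤ 0 := by
    by_contra h
    push_neg at h
    have hc := hx.continuousAt (x := a)
    rw [Metric.continuousAt_iff] at hc
    obtain ⟨δ, hδ, hδ'⟩ := hc ((μ {p : ℝ×ℝ | p.1 = a}).toReal) h
    have := key (δ/2) (by linarith)
    have h2 := hδ' (x := a - δ/2) (by rw [Real.dist_eq]; rw [abs_of_nonpos] <;> linarith)
    rw [Real.dist_eq, abs_sub_comm, abs_of_nonneg] at h2
    · linarith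
    · have : margX μ (a - δ/2) ≤ margX μ a := by
        apply ENNReal.toReal_mono (measure_ne_top _ _)
        exact measure_mono (by intro p hp; simp only [mem_setOf_eq] at *; linarith)
      linarith
  have hnn := ENNReal.toReal_nonneg (a := μ {p : ℝ×ℝ | p.1 = a})
  have hfin := measure_ne_top μ {p : ℝ×ℝ | p.1 = a}
  have hz : (μ {p : ℝ×ℝ | p.1 = a}).toReal = 0 := le_antisymm h0 hnn
  exact (ENNReal.toReal_eq_zero_iff _).mp hz |>.resolve_right (by simp [hfin])

/-- Continuity of the y-marginal CDF implies horizontal lines are null. -/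
lemma stmt7_null_line_y (μ : Measure (ℝ × ℝ)) [IsProbabilityMeasure μ]
    (hy : Continuous (margY μ)) (a : ℝ) : μ {p | p.2 = a} = 0 := by
  have key : ∀ ε : ℝ, 0 < ε → (μ {p | p.2 = a}).toReal ≤ margY μ a - margY μ (a - ε) := by
    intro ε hε
    have hsub : {p : ℝ × ℝ | p.2 = a} ⊆ {p | p.2 ≤ a} \ {p | p.2 ≤ a - ε} := by
      intro p hp
      simp only [mem_setOf_eq] at hp
      constructor
      · simp [hp]
      · simp [hp]; linarith
    have hmono := measure_mono (μ := μ) hsub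
    have hdiff : μ ({p : ℝ × ℝ | p.2 ≤ a} \ {p | p.2 ≤ a - ε}) =
        μ {p | p.2 ≤ a} - μ {p | p.2 ≤ a - ε} := by
      apply measure_diff
      · intro p hp; simp only [mem_setOf_eq] at *; linarith
      · exact (measurableSet_le (measurable_snd) measurable_const).nullMeasurableSet
      · exact measure_ne_top _ _
    rw [hdiff] at hmono
    have h1 := measure_ne_top μ {p : ℝ×ℝ | p.2 ≤ a}
    have hle : μ {p : ℝ×ℝ | p.2 ≤ a - ε} ≤ μ {p : ℝ×ℝ | p.2 ≤ a} :=
      measure_mono (by intro p hp; simp only [mem_setOf_eq] at *; linarith)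
    calc (μ {p | p.2 = a}).toReal ≤ (μ {p : ℝ×ℝ | p.2 ≤ a} - μ {p | p.2 ≤ a - ε}).toReal :=
          ENNReal.toReal_mono (by simp [ENNReal.sub_ne_top h1]) hmono
      _ = margY μ a - margY μ (a - ε) := by
          rw [ENNReal.toReal_sub_of_le hle h1]; rfl
  have h0 : (μ {p : ℝ×ℝ | p.2 = a}).toReal ≤ 0 := by
    by_contra h
    push_neg at h
    have hc := hy.continuousAt (x := a)
    rw [Metric.continuousAt_iff] at hc
    obtain ⟨δ, hδ, hδ'⟩ := hc ((μ {p : ℝ×ℝ | p.2 = a}).toReal) h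
    have := key (δ/2) (by linarith)
    have h2 := hδ' (x := a - δ/2) (by rw [Real.dist_eq]; rw [abs_of_nonpos] <;> linarith)
    rw [Real.dist_eq, abs_sub_comm, abs_of_nonneg] at h2
    · linarith
    · have : margY μ (a - δ/2) ≤ margY μ a := by
        apply ENNReal.toReal_mono (measure_ne_top _ _)
        exact measure_mono (by intro p hp; simp only [mem_setOf_eq] at *; linarith)
      linarith
  have hnn := ENNReal.toReal_nonneg (a := μ {p : ℝ×ℝ | p.2 = a})
  have hfin := measure_ne_top μ {p : ℝ×ℝ | p.2 = a}
  have hz : (μ {p : ℝ×ℝ | p.2 = a}).toReal = 0 := le_antisymm h0 hnn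
  exact (ENNReal.toReal_eq_zero_iff _).mp hz |>.resolve_right (by simp [hfin])

/-- Portmanteau for the planar measures: convergence on null-frontier sets. -/
lemma stmt7_tendsto_box (μs : ℕ → Measure (ℝ × ℝ)) (μ : Measure (ℝ × ℝ))
    [IsProbabilityMeasure μ] [∀ n, IsProbabilityMeasure (μs n)]
    (hconv : WeakConv μs μ) {E : Set (ℝ×ℝ)} (hE : μ (frontier E) = 0) :
    Tendsto (fun n => μs n E) atTop (𝓝 (μ E)) := by
  set P : ℕ → ProbabilityMeasure (ℝ×ℝ) := fun n => ⟨μs n, inferInstance⟩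
  set Q : ProbabilityMeasure (ℝ×ℝ) := ⟨μ, inferInstance⟩
  have hP : Tendsto P atTop (𝓝 Q) := by
    rw [ProbabilityMeasure.tendsto_iff_forall_integral_tendsto]
    exact hconv
  exact ProbabilityMeasure.tendsto_measure_of_null_frontier_of_tendsto' hP hE

/-- The product of the k-fold i.i.d. measure under an evaluation pair is the product measure. -/
lemma stmt7_map_pair (k : ℕ) (μ : Measure (ℝ×ℝ)) [IsProbabilityMeasure μ]
    (i j : Fin k) (hij : i ≠ j) :
    (Measure.pi fun _ : Fin k => μ).map (fun p => (p i, p j)) = μ.prod μ := by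
  have hmeas : Measurable (fun p : Fin k → ℝ×ℝ => (p i, p j)) :=
    (measurable_pi_apply i).prodMk (measurable_pi_apply j)
  refine (Measure.prod_eq ?_).symm
  intro s t hs ht
  rw [Measure.map_apply hmeas (hs.prod ht)]
  have hpre : (fun p : Fin k → ℝ×ℝ => (p i, p j)) ⁻¹' (s ×ˢ t) =
      Set.pi univ (fun l => if l = i then s else if l = j then t else univ) := by
    ext p
    simp only [mem_preimage, mem_prod, Set.mem_pi, mem_univ, forall_true_left]
    constructor
    · rintro ⟨h1, h2⟩ l
      by_cases h : l = i
      · subst h; simpa using h1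
      · by_cases h' : l = j
        · subst h'; simp [h, h2]
        · simp [h, h']
    · intro h
      have h1 := h i
      have h2 := h j
      simp only [if_pos rfl] at h1
      rw [if_neg hij.symm, if_pos rfl] at h2
      exact ⟨h1, h2⟩
  rw [hpre, Measure.pi_pi]
  have : ∀ l : Fin k, μ (if l = i then s else if l = j then t else univ)
      = (if l = i then μ s else 1) * (if l = j then μ t else 1) := by
    intro l
    split_ifs with h h' <;> simp_all [measure_univ]
  simp_rw [this, Finset.prod_mul_distrib, Finset.prod_ite_eq', Finset.mem_univ, if_pos]

lemma stmt7_null_eq_x (k : ℕ) (μ : Measure (ℝ×ℝ)) [IsProbabilityMeasure μ]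
    (hμ : ∀ a : ℝ, μ {p : ℝ×ℝ | p.1 = a} = 0) (i j : Fin k) (hij : i ≠ j) :
    (Measure.pi fun _ : Fin k => μ) {p | (p i).1 = (p j).1} = 0 := by
  have hmeas : Measurable (fun p : Fin k → ℝ×ℝ => (p i, p j)) :=
    (measurable_pi_apply i).prodMk (measurable_pi_apply j)
  have hSmeas : MeasurableSet {u : (ℝ×ℝ)×(ℝ×ℝ) | u.1.1 = u.2.1} :=
    measurableSet_eq_fun (measurable_fst.fst) (measurable_snd.fst)
  have hre : {p : Fin k → ℝ×ℝ | (p i).1 = (p j).1}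
      = (fun p : Fin k → ℝ×ℝ => (p i, p j)) ⁻¹' {u : (ℝ×ℝ)×(ℝ×ℝ) | u.1.1 = u.2.1} := rfl
  rw [hre, ← Measure.map_apply hmeas hSmeas, stmt7_map_pair k μ i j hij]
  rw [Measure.prod_apply hSmeas]
  have hz : ∀ a : ℝ×ℝ, μ (Prod.mk a ⁻¹' {u : (ℝ×ℝ)×(ℝ×ℝ) | u.1.1 = u.2.1}) = 0 := by
    intro a
    have : Prod.mk a ⁻¹' {u : (ℝ×ℝ)×(ℝ×ℝ) | u.1.1 = u.2.1} = {b : ℝ×ℝ | b.1 = a.1} := by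
      ext b; simp [eq_comm]
    rw [this]; exact hμ a.1
  rw [lintegral_congr hz, lintegral_zero]

lemma stmt7_null_eq_y (k : ℕ) (μ : Measure (ℝ×ℝ)) [IsProbabilityMeasure μ]
    (hμ : ∀ a : ℝ, μ {p : ℝ×ℝ | p.2 = a} = 0) (i j : Fin k) (hij : i ≠ j) :
    (Measure.pi fun _ : Fin k => μ) {p | (p i).2 = (p j).2} = 0 := by
  have hmeas : Measurable (fun p : Fin k → ℝ×ℝ => (p i, p j)) :=
    (measurable_pi_apply i).prodMk (measurable_pi_apply j)
  have hSmeas : MeasurableSet {u : (ℝ×ℝ)×(ℝ×ℝ) | u.1.2 = u.2.2} :=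
    measurableSet_eq_fun (measurable_fst.snd) (measurable_snd.snd)
  have hre : {p : Fin k → ℝ×ℝ | (p i).2 = (p j).2}
      = (fun p : Fin k → ℝ×ℝ => (p i, p j)) ⁻¹' {u : (ℝ×ℝ)×(ℝ×ℝ) | u.1.2 = u.2.2} := rfl
  rw [hre, ← Measure.map_apply hmeas hSmeas, stmt7_map_pair k μ i j hij]
  rw [Measure.prod_apply hSmeas]
  have hz : ∀ a : ℝ×ℝ, μ (Prod.mk a ⁻¹' {u : (ℝ×ℝ)×(ℝ×ℝ) | u.1.2 = u.2.2}) = 0 := by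
    intro a
    have : Prod.mk a ⁻¹' {u : (ℝ×ℝ)×(ℝ×ℝ) | u.1.2 = u.2.2} = {b : ℝ×ℝ | b.2 = a.2} := by
      ext b; simp [eq_comm]
    rw [this]; exact hμ a.2
  rw [lintegral_congr hz, lintegral_zero]

/-- Open boxes in the plane. -/
def Stmt7PlaneBox (S : Set (ℝ×ℝ)) : Prop := ∃ a b c d : ℝ, S = Ioo a b ×ˢ Ioo c d

/-- Products of open plane boxes in the k-fold product space. -/
def Stmt7MultiBox {k : ℕ} (S : Set (Fin k → ℝ×ℝ)) : Prop :=
  ∃ T : Fin k → Set (ℝ×ℝ), (∀ i, Stmt7PlaneBox (T i)) ∧ S = Set.pi univ T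

lemma Stmt7PlaneBox.inter {S S' : Set (ℝ×ℝ)} (h : Stmt7PlaneBox S) (h' : Stmt7PlaneBox S') :
    Stmt7PlaneBox (S ∩ S') := by
  obtain ⟨a, b, c, d, rfl⟩ := h
  obtain ⟨a', b', c', d', rfl⟩ := h'
  exact ⟨a ⊔ a', b ⊓ b', c ⊔ c', d ⊓ d', by rw [Set.prod_inter_prod, Ioo_inter_Ioo, Ioo_inter_Ioo]⟩

lemma Stmt7PlaneBox.isOpen {S : Set (ℝ×ℝ)} (h : Stmt7PlaneBox S) : IsOpen S := by
  obtain ⟨a, b, c, d, rfl⟩ := h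
  exact isOpen_Ioo.prod isOpen_Ioo

lemma Stmt7PlaneBox.null_frontier {μ : Measure (ℝ×ℝ)} [IsProbabilityMeasure μ]
    (hμx : ∀ a : ℝ, μ {p : ℝ×ℝ | p.1 = a} = 0) (hμy : ∀ a : ℝ, μ {p : ℝ×ℝ | p.2 = a} = 0)
    (a b c d : ℝ) : μ (frontier (Ioo a b ×ˢ Ioo c d)) = 0 := by
  have hsub : frontier (Ioo a b ×ˢ Ioo c d) ⊆
      ({p : ℝ × ℝ | p.1 = a} ∪ {p | p.1 = b}) ∪ ({p | p.2 = c} ∪ {p | p.2 = d}) := by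
    rw [frontier_prod_eq]
    rintro p (⟨-, h2⟩ | ⟨h1, -⟩)
    · rcases lt_or_ge c d with h | h
      · rw [frontier_Ioo h] at h2
        rcases h2 with h2 | h2 <;> simp_all
      · rw [Ioo_eq_empty (by exact not_lt.mpr h)] at h2; simp at h2
    · rcases lt_or_ge a b with h | h
      · rw [frontier_Ioo h] at h1
        rcases h1 with h1 | h1 <;> simp_all
      · rw [Ioo_eq_empty (by exact not_lt.mpr h)] at h1; simp at h1
  refine measure_mono_null hsub ?_
  refine measure_union_null (measure_union_null ?_ ?_) (measure_union_null ?_ ?_) <;> simp [*]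

lemma Stmt7MultiBox.inter {k : ℕ} {S S' : Set (Fin k → ℝ×ℝ)}
    (h : Stmt7MultiBox S) (h' : Stmt7MultiBox S') : Stmt7MultiBox (S ∩ S') := by
  obtain ⟨T, hT, rfl⟩ := h
  obtain ⟨T', hT', rfl⟩ := h'
  exact ⟨fun i => T i ∩ T' i, fun i => (hT i).inter (hT' i), (Set.pi_inter_distrib).symm⟩

lemma Stmt7MultiBox.isOpen {k : ℕ} {S : Set (Fin k → ℝ×ℝ)} (h : Stmt7MultiBox S) : IsOpen S := by
  obtain ⟨T, hT, rfl⟩ := h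
  exact isOpen_set_pi finite_univ (fun i _ => (hT i).isOpen)

lemma Stmt7MultiBox.measurableSet {k : ℕ} {S : Set (Fin k → ℝ×ℝ)} (h : Stmt7MultiBox S) :
    MeasurableSet S := h.isOpen.measurableSet

section
variable {k : ℕ} (μs : ℕ → Measure (ℝ × ℝ)) (μ : Measure (ℝ × ℝ))
  [IsProbabilityMeasure μ] [∀ n, IsProbabilityMeasure (μs n)]

lemma stmt7_multiBox_tendsto
    (hplane : ∀ S : Set (ℝ×ℝ), Stmt7PlaneBox S → Tendsto (fun n => μs n S) atTop (𝓝 (μ S)))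
    {S : Set (Fin k → ℝ×ℝ)} (hS : Stmt7MultiBox S) :
    Tendsto (fun n => ((Measure.pi fun _ : Fin k => μs n) S).toReal) atTop
      (𝓝 (((Measure.pi fun _ : Fin k => μ) S).toReal)) := by
  obtain ⟨T, hT, rfl⟩ := hS
  have hpi : ∀ ν : Measure (ℝ×ℝ), ∀ _ : IsProbabilityMeasure ν,
      ((Measure.pi fun _ : Fin k => ν) (Set.pi univ T)).toReal = ∏ i, (ν (T i)).toReal := by
    intro ν _
    rw [Measure.pi_pi, ENNReal.toReal_prod]
  simp_rw [fun n => hpi (μs n) inferInstance, hpi μ inferInstance]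
  exact tendsto_finset_prod _ (fun i _ =>
    (ENNReal.tendsto_toReal (measure_ne_top μ (T i))).comp (hplane (T i) (hT i)))

lemma stmt7_biUnion_boxes_tendsto
    (hplane : ∀ S : Set (ℝ×ℝ), Stmt7PlaneBox S → Tendsto (fun n => μs n S) atTop (𝓝 (μ S)))
    {ι : Type} [DecidableEq ι] (s : Finset ι) (B : ι → Set (Fin k → ℝ×ℝ))
    (hB : ∀ i, Stmt7MultiBox (B i)) :
    Tendsto (fun n => ((Measure.pi fun _ : Fin k => μs n) (⋃ i ∈ s, B i)).toReal) atTop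
      (𝓝 (((Measure.pi fun _ : Fin k => μ) (⋃ i ∈ s, B i)).toReal)) := by
  induction s using Finset.induction_on generalizing B with
  | empty => simp
  | @insert a s ha IH =>
    have key : ∀ (ν : Measure (Fin k → ℝ×ℝ)), IsFiniteMeasure ν →
        (ν (⋃ i ∈ insert a s, B i)).toReal =
          (ν (B a)).toReal + (ν (⋃ i ∈ s, B i)).toReal
            - (ν (⋃ i ∈ s, B a ∩ B i)).toReal := by
      intro ν hν
      rw [Finset.set_biUnion_insert]
      have h1 : ν (B a ∪ ⋃ i ∈ s, B i) + ν (B a ∩ ⋃ i ∈ s, B i) =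
          ν (B a) + ν (⋃ i ∈ s, B i) :=
        measure_union_add_inter _ (MeasurableSet.biUnion s.countable_toSet
          (fun i _ => (hB i).measurableSet))
      have h2 : B a ∩ ⋃ i ∈ s, B i = ⋃ i ∈ s, B a ∩ B i := by
        rw [Set.inter_iUnion₂]
      have h3 := congrArg ENNReal.toReal h1
      rw [ENNReal.toReal_add (measure_ne_top _ _) (measure_ne_top _ _),
        ENNReal.toReal_add (measure_ne_top _ _) (measure_ne_top _ _)] at h3
      rw [h2] at h3
      linarith
    simp_rw [fun n => key (Measure.pi fun _ : Fin k => μs n) inferInstance,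
      key (Measure.pi fun _ : Fin k => μ) inferInstance]
    exact (((stmt7_multiBox_tendsto μs μ hplane (hB a)).add (IH B hB)).sub
      (IH (fun i => B a ∩ B i) (fun i => (hB a).inter (hB i))))
end

lemma stmt7_planeBox_nbhd {v : Set (ℝ×ℝ)} (hv : IsOpen v) {x : ℝ×ℝ} (hx : x ∈ v) :
    ∃ S, Stmt7PlaneBox S ∧ x ∈ S ∧ S ⊆ v := by
  obtain ⟨r, hr, hball⟩ := Metric.isOpen_iff.mp hv x hx
  refine ⟨Ioo (x.1 - r) (x.1 + r) ×ˢ Ioo (x.2 - r) (x.2 + r), ⟨_, _, _, _, rfl⟩, ?_, ?_⟩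
  · constructor
    · constructor <;> simp <;> linarith
    · constructor <;> simp <;> linarith
  · refine subset_trans ?_ hball
    intro y hy
    obtain ⟨⟨h1, h2⟩, h3, h4⟩ := hy
    rw [Metric.mem_ball, Prod.dist_eq, max_lt_iff]
    constructor <;> rw [Real.dist_eq, abs_lt] <;> constructor <;> linarith

section
variable {k : ℕ} (μs : ℕ → Measure (ℝ × ℝ)) (μ : Measure (ℝ × ℝ))
  [IsProbabilityMeasure μ] [∀ n, IsProbabilityMeasure (μs n)]

lemma stmt7_multiBox_nbhd {G : Set (Fin k → ℝ×ℝ)} (hG : IsOpen G) {p : Fin k → ℝ×ℝ}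
    (hp : p ∈ G) : ∃ S, Stmt7MultiBox S ∧ p ∈ S ∧ S ⊆ G := by
  obtain ⟨I, u, hu, hsub⟩ := isOpen_pi_iff.mp hG p hp
  have hchoice : ∀ i : Fin k, ∃ S, Stmt7PlaneBox S ∧ p i ∈ S ∧ (i ∈ I → S ⊆ u i) := by
    intro i
    by_cases hi : i ∈ I
    · obtain ⟨S, h1, h2, h3⟩ := stmt7_planeBox_nbhd (hu i hi).1 (hu i hi).2
      exact ⟨S, h1, h2, fun _ => h3⟩
    · obtain ⟨S, h1, h2, h3⟩ := stmt7_planeBox_nbhd (isOpen_univ (X := ℝ×ℝ)) (mem_univ (p i))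
      exact ⟨S, h1, h2, fun h => absurd h hi⟩
  choose T hbox hmem hss using hchoice
  refine ⟨Set.pi univ T, ⟨T, hbox, rfl⟩, fun i _ => hmem i, ?_⟩
  refine subset_trans ?_ hsub
  intro q hq i hi
  exact hss i hi (hq i (mem_univ i))

lemma stmt7_h_opens
    (hplane : ∀ S : Set (ℝ×ℝ), Stmt7PlaneBox S → Tendsto (fun n => μs n S) atTop (𝓝 (μ S)))
    (G : Set (Fin k → ℝ×ℝ)) (hG : IsOpen G) :
    (Measure.pi fun _ : Fin k => μ) G ≤
      atTop.liminf fun n => (Measure.pi fun _ : Fin k => μs n) G := by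
  classical
  rw [hG.measurableSet.measure_eq_iSup_isCompact]
  refine iSup₂_le fun K hKG => iSup_le fun hK => ?_
  have hcov : ∀ x : K, ∃ S, Stmt7MultiBox S ∧ (x : Fin k → ℝ×ℝ) ∈ S ∧ S ⊆ G :=
    fun x => stmt7_multiBox_nbhd hG (hKG x.2)
  choose S hSbox hSmem hSsub using hcov
  obtain ⟨t, ht⟩ := hK.elim_finite_subcover S (fun x => (hSbox x).isOpen)
    (fun x hx => mem_iUnion.mpr ⟨⟨x, hx⟩, hSmem ⟨x, hx⟩⟩)
  set U : Set (Fin k → ℝ×ℝ) := ⋃ x ∈ t, S x with hU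
  have hUG : U ⊆ G := iUnion₂_subset fun x _ => hSsub x
  have htendsto := stmt7_biUnion_boxes_tendsto μs μ hplane t S (fun x => hSbox x)
  have htendsto' : Tendsto (fun n => (Measure.pi fun _ : Fin k => μs n) U) atTop
      (𝓝 ((Measure.pi fun _ : Fin k => μ) U)) := by
    have h1 : ∀ n, (Measure.pi fun _ : Fin k => μs n) U =
        ENNReal.ofReal (((Measure.pi fun _ : Fin k => μs n) U).toReal) := fun n =>
      (ENNReal.ofReal_toReal (measure_ne_top _ _)).symm
    have h2 : (Measure.pi fun _ : Fin k => μ) U =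
        ENNReal.ofReal (((Measure.pi fun _ : Fin k => μ) U).toReal) :=
      (ENNReal.ofReal_toReal (measure_ne_top _ _)).symm
    rw [h2]
    exact Tendsto.congr (fun n => (h1 n).symm)
      ((ENNReal.continuous_ofReal.tendsto _).comp htendsto)
  calc (Measure.pi fun _ : Fin k => μ) K
      ≤ (Measure.pi fun _ : Fin k => μ) U := measure_mono ht
    _ = atTop.liminf (fun n => (Measure.pi fun _ : Fin k => μs n) U) :=
        htendsto'.liminf_eq.symm
    _ ≤ atTop.liminf fun n => (Measure.pi fun _ : Fin k => μs n) G :=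
        liminf_le_liminf (.of_forall fun n => measure_mono hUG)
end

lemma stmt7_isOpen_strictMono_set {k : ℕ} (f : Fin k → (Fin k → ℝ×ℝ) → ℝ)
    (hf : ∀ i, Continuous (f i)) :
    IsOpen {p : Fin k → ℝ×ℝ | StrictMono fun i => f i p} := by
  have hset : {p : Fin k → ℝ×ℝ | StrictMono fun i => f i p} =
      ⋂ i, ⋂ j, {p | i < j → f i p < f j p} := by
    ext p
    simp only [mem_setOf_eq, mem_iInter]
    exact ⟨fun h i j hij => h hij, fun h i j hij => h i j hij⟩
  rw [hset]
  refine isOpen_iInter_of_finite fun i => isOpen_iInter_of_finite fun j => ?_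
  by_cases hij : i < j
  · have : {p : Fin k → ℝ×ℝ | i < j → f i p < f j p} = {p | f i p < f j p} := by
      ext p; simp [hij]
    rw [this]
    exact isOpen_lt (hf i) (hf j)
  · have : {p : Fin k → ℝ×ℝ | i < j → f i p < f j p} = univ := by
      ext p; simp [hij]
    rw [this]; exact isOpen_univ

lemma stmt7_patternSet_isOpen {k : ℕ} (τ : Equiv.Perm (Fin k)) : IsOpen (patternSet τ) := by
  have hset : patternSet τ = ⋃ ρ : Equiv.Perm (Fin k),
      ({p : Fin k → ℝ×ℝ | StrictMono fun i => (p (ρ i)).1} ∩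
       {p | StrictMono fun j => (p (ρ (τ⁻¹ j))).2}) := by
    ext p; simp [patternSet, mem_iUnion, mem_inter_iff]
  rw [hset]
  refine isOpen_iUnion fun ρ => IsOpen.inter ?_ ?_
  · exact stmt7_isOpen_strictMono_set _ (fun i => (continuous_apply (ρ i)).fst)
  · exact stmt7_isOpen_strictMono_set _ (fun j => (continuous_apply (ρ (τ⁻¹ j))).snd)

/-- The "bad set" of tuples with a repeated x- or y-coordinate. -/
def stmt7BadSet (k : ℕ) : Set (Fin k → ℝ×ℝ) :=
  ⋃ i, ⋃ j, ⋃ (_ : i ≠ j), ({p : Fin k → ℝ×ℝ | (p i).1 = (p j).1} ∪ {p | (p i).2 = (p j).2})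

lemma stmt7_frontier_patternSet_subset {k : ℕ} (τ : Equiv.Perm (Fin k)) :
    frontier (patternSet τ) ⊆ stmt7BadSet k := by
  rw [(stmt7_patternSet_isOpen τ).frontier_eq]
  rintro p ⟨hpc, hpn⟩
  by_contra hD
  apply hpn
  have hsep : ∀ i j : Fin k, i ≠ j → (p i).1 ≠ (p j).1 ∧ (p i).2 ≠ (p j).2 := by
    intro i j hij
    constructor <;> intro h <;> exact hD (mem_iUnion.mpr ⟨i, mem_iUnion.mpr ⟨j,
      mem_iUnion.mpr ⟨hij, by simp [h]⟩⟩⟩)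
  set W : Set (Fin k → ℝ×ℝ) :=
    (⋂ i, ⋂ j, {q : Fin k → ℝ×ℝ | (p i).1 < (p j).1 → (q i).1 < (q j).1}) ∩
    (⋂ i, ⋂ j, {q : Fin k → ℝ×ℝ | (p i).2 < (p j).2 → (q i).2 < (q j).2}) with hW
  have hWopen : IsOpen W := by
    refine IsOpen.inter ?_ ?_ <;>
      refine isOpen_iInter_of_finite fun i => isOpen_iInter_of_finite fun j => ?_
    · by_cases h : (p i).1 < (p j).1
      · have : {q : Fin k → ℝ×ℝ | (p i).1 < (p j).1 → (q i).1 < (q j).1}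
            = {q | (q i).1 < (q j).1} := by ext q; simp [h]
        rw [this]; exact isOpen_lt (continuous_apply i).fst (continuous_apply j).fst
      · have : {q : Fin k → ℝ×ℝ | (p i).1 < (p j).1 → (q i).1 < (q j).1} = univ := by
          ext q; simp [h]
        rw [this]; exact isOpen_univ
    · by_cases h : (p i).2 < (p j).2
      · have : {q : Fin k → ℝ×ℝ | (p i).2 < (p j).2 → (q i).2 < (q j).2}
            = {q | (q i).2 < (q j).2} := by ext q; simp [h]
        rw [this]; exact isOpen_lt (continuous_apply i).snd (continuous_apply j).snd
      · have : {q : Fin k → ℝ×ℝ | (p i).2 < (p j).2 → (q i).2 < (q j).2} = univ := by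
          ext q; simp [h]
        rw [this]; exact isOpen_univ
  have hpW : p ∈ W := by
    constructor <;> exact mem_iInter.mpr fun i => mem_iInter.mpr fun j => fun h => h
  obtain ⟨q, hqW, hq⟩ := _root_.mem_closure_iff.mp hpc W hWopen hpW
  obtain ⟨ρ, hq1, hq2⟩ := hq
  obtain ⟨hqW1, hqW2⟩ := hqW
  refine ⟨ρ, ?_, ?_⟩
  · intro i j hij
    have hne : ρ i ≠ ρ j := fun h => absurd (ρ.injective h) hij.ne
    rcases lt_trichotomy ((p (ρ i)).1) ((p (ρ j)).1) with h | h | h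
    · exact h
    · exact absurd h (hsep _ _ hne).1
    · have := (mem_iInter.mp (mem_iInter.mp hqW1 (ρ j)) (ρ i)) h
      exact absurd (hq1 hij) (lt_asymm this)
  · intro i j hij
    have hne : ρ (τ⁻¹ i) ≠ ρ (τ⁻¹ j) := fun h =>
      absurd (τ⁻¹.injective (ρ.injective h)) hij.ne
    rcases lt_trichotomy ((p (ρ (τ⁻¹ i))).2) ((p (ρ (τ⁻¹ j))).2) with h | h | h
    · exact h
    · exact absurd h (hsep _ _ hne).2
    · have := (mem_iInter.mp (mem_iInter.mp hqW2 (ρ (τ⁻¹ j))) (ρ (τ⁻¹ i))) h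
      exact absurd (hq2 hij) (lt_asymm this)

end Stmt7Aux

/-- weak convergence implies convergence of all pattern densities,
provided the limit has continuous marginals. -/
theorem stmt7 (μs : ℕ → Measure (ℝ × ℝ)) (μ : Measure (ℝ × ℝ))
    [IsProbabilityMeasure μ] [∀ n, IsProbabilityMeasure (μs n)]
    (hsupp : μ ((Set.Icc 0 1 ×ˢ Set.Icc (0:ℝ) 1)ᶜ) = 0)
    (hsupps : ∀ n, μs n ((Set.Icc 0 1 ×ˢ Set.Icc (0:ℝ) 1)ᶜ) = 0)
    (hconv : WeakConv μs μ)
    (hx : Continuous (margX μ)) (hy : Continuous (margY μ))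
    (k : ℕ) (τ : Equiv.Perm (Fin k)) :
    Filter.Tendsto (fun n => patternDensity τ (μs n)) Filter.atTop
      (nhds (patternDensity τ μ)) := by
  classical
  haveI : ∀ n, IsProbabilityMeasure (Measure.pi fun _ : Fin k => μs n) := fun n => inferInstance
  haveI : IsProbabilityMeasure (Measure.pi fun _ : Fin k => μ) := inferInstance
  have hμx : ∀ a : ℝ, μ {p : ℝ×ℝ | p.1 = a} = 0 := stmt7_null_line_x μ hx
  have hμy : ∀ a : ℝ, μ {p : ℝ×ℝ | p.2 = a} = 0 := stmt7_null_line_y μ hy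
  have hplane : ∀ S : Set (ℝ×ℝ), Stmt7PlaneBox S →
      Tendsto (fun n => μs n S) atTop (nhds (μ S)) := by
    rintro S ⟨a, b, c, d, rfl⟩
    exact stmt7_tendsto_box μs μ hconv (Stmt7PlaneBox.null_frontier hμx hμy a b c d)
  have hopens := stmt7_h_opens (k := k) μs μ hplane
  have hnull : (Measure.pi fun _ : Fin k => μ) (frontier (patternSet τ)) = 0 := by
    refine measure_mono_null (stmt7_frontier_patternSet_subset τ) ?_
    refine measure_iUnion_null fun i => measure_iUnion_null fun j =>
      measure_iUnion_null fun hij => measure_union_null ?_ ?_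
    · exact stmt7_null_eq_x k μ hμx i j hij
    · exact stmt7_null_eq_y k μ hμy i j hij
  have hmain := MeasureTheory.tendsto_measure_of_null_frontier hopens hnull
  have hfin : (Measure.pi fun _ : Fin k => μ) (patternSet τ) ≠ ⊤ := measure_ne_top _ _
  exact (ENNReal.tendsto_toReal hfin).comp hmain
end

section
/- Let μ and μ_n (n = 1,2,…) be generalized permutons (λ_n-permutons with λ_n in a compact subinterval of (0,1]) regarded as probability measures on [0,1]². Then the following are equivalent: (i) d_∞(μ_n, μ) → 0; (ii) d_□(μ_n, μ) → 0; (iii) μ_n ⇒ μ (weak convergence). -/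
open MeasureTheory Set Filter
open scoped ENNReal

/-!
The mass of a half-open rectangle is an inclusion–exclusion of four values of the joint
distribution function `F`, and closed rectangles are decreasing limits of half-open ones, so
`d_∞ ≤ d_□ ≤ 4 d_∞`. If `d_∞ → 0`, the masses of the cells of a `k × k` grid converge, and for a
bounded continuous `f`, uniformly continuous on the square, `∫ f` is within `ε` of the Riemann sum
`∑ f(corner) · mass(cell)`. Conversely, under weak convergence, continuous corner bumps sandwich
the indicator of a quadrant; since every `F` involved is `1/a`-Lipschitz, this gives pointwise
convergence of `F`, and monotonicity upgrades convergence on a finite grid to uniform convergence.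
-/

open MeasureTheory Set Filter Topology
open scoped Function

def unitSquare : Set (ℝ × ℝ) := Icc 0 1 ×ˢ Icc 0 1

section JointCDF

variable {ν : Measure (ℝ × ℝ)} [IsFiniteMeasure ν]

lemma jointCDF_mono {x x' y y' : ℝ} (hx : x ≤ x') (hy : y ≤ y') :
    jointCDF ν x y ≤ jointCDF ν x' y' :=
  measureReal_mono fun _ hp => ⟨hp.1.trans hx, hp.2.trans hy⟩

lemma jointCDF_sub_jointCDF_fst {x x' : ℝ} (hx : x ≤ x') (y : ℝ) :
    jointCDF ν x' y - jointCDF ν x y = ν.real (Ioc x x' ×ˢ Iic y) := by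
  have hsub : Iic x ×ˢ Iic y ⊆ Iic x' ×ˢ Iic y := prod_mono (Iic_subset_Iic.2 hx) subset_rfl
  have hset : Iic x' ×ˢ Iic y \ Iic x ×ˢ Iic y = Ioc x x' ×ˢ Iic y := by
    rw [prod_sdiff_prod, sdiff_self, prod_empty, empty_union, Iic_sdiff_Iic]
  rw [← hset, measureReal_sdiff hsub (measurableSet_Iic.prod measurableSet_Iic)]
  rfl

lemma jointCDF_sub_jointCDF_snd (x : ℝ) {y y' : ℝ} (hy : y ≤ y') :
    jointCDF ν x y' - jointCDF ν x y = ν.real (Iic x ×ˢ Ioc y y') := by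
  have hsub : Iic x ×ˢ Iic y ⊆ Iic x ×ˢ Iic y' := prod_mono subset_rfl (Iic_subset_Iic.2 hy)
  have hset : Iic x ×ˢ Iic y' \ Iic x ×ˢ Iic y = Iic x ×ˢ Ioc y y' := by
    rw [prod_sdiff_prod, sdiff_self, empty_prod, union_empty, Iic_sdiff_Iic]
  rw [← hset, measureReal_sdiff hsub (measurableSet_Iic.prod measurableSet_Iic)]
  rfl

lemma measureReal_Ioc_prod_Ioc {x₁ x₂ y₁ y₂ : ℝ} (hx : x₁ ≤ x₂) (hy : y₁ ≤ y₂) :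
    ν.real (Ioc x₁ x₂ ×ˢ Ioc y₁ y₂) =
      jointCDF ν x₂ y₂ - jointCDF ν x₁ y₂ - (jointCDF ν x₂ y₁ - jointCDF ν x₁ y₁) := by
  have hsub : Ioc x₁ x₂ ×ˢ Iic y₁ ⊆ Ioc x₁ x₂ ×ˢ Iic y₂ :=
    prod_mono subset_rfl (Iic_subset_Iic.2 hy)
  rw [jointCDF_sub_jointCDF_fst hx, jointCDF_sub_jointCDF_fst hx,
    ← measureReal_sdiff hsub (measurableSet_Ioc.prod measurableSet_Iic), prod_sdiff_prod,
    sdiff_self, empty_prod, union_empty, Iic_sdiff_Iic]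

lemma jointCDF_sub_jointCDF_le_margX_sub {x x' : ℝ} (hx : x ≤ x') (y : ℝ) :
    jointCDF ν x' y - jointCDF ν x y ≤ margX ν x' - margX ν x := by
  have hsub : {p : ℝ × ℝ | p.1 ≤ x} ⊆ {p | p.1 ≤ x'} := fun _ hp => hp.trans hx
  rw [jointCDF_sub_jointCDF_fst hx, margX, margX, ← measureReal_def, ← measureReal_def,
    ← measureReal_sdiff hsub (measurable_fst measurableSet_Iic)]
  exact measureReal_mono fun p hp => ⟨hp.1.2, fun h => hp.1.1.not_ge h⟩

lemma jointCDF_sub_jointCDF_le_margY_sub (x : ℝ) {y y' : ℝ} (hy : y ≤ y') :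
    jointCDF ν x y' - jointCDF ν x y ≤ margY ν y' - margY ν y := by
  have hsub : {p : ℝ × ℝ | p.2 ≤ y} ⊆ {p | p.2 ≤ y'} := fun _ hp => hp.trans hy
  rw [jointCDF_sub_jointCDF_snd x hy, margY, margY, ← measureReal_def, ← measureReal_def,
    ← measureReal_sdiff hsub (measurable_snd measurableSet_Iic)]
  exact measureReal_mono fun p hp => ⟨hp.2.2, fun h => hp.2.1.not_ge h⟩

end JointCDF

section UnitSquare

variable {ν ν₁ ν₂ : Measure (ℝ × ℝ)}

lemma jointCDF_eq_zero_of_neg (hν : ν unitSquareᶜ = 0) {x y : ℝ} (h : x < 0 ∨ y < 0) :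
    jointCDF ν x y = 0 := by
  have hsub : {p : ℝ × ℝ | p.1 ≤ x ∧ p.2 ≤ y} ⊆ unitSquareᶜ := by
    rintro p ⟨hx, hy⟩ ⟨⟨hx0, -⟩, hy0, -⟩
    rcases h with h | h <;> linarith
  simp [jointCDF, measure_mono_null hsub hν]

lemma jointCDF_eq_measureReal_Icc_prod_Icc (hν : ν unitSquareᶜ = 0) (x y : ℝ) :
    jointCDF ν x y = ν.real (Icc 0 x ×ˢ Icc 0 y) := by
  refine congrArg ENNReal.toReal (le_antisymm ?_ (measure_mono fun p hp => ⟨hp.1.2, hp.2.2⟩))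
  rw [← measure_inter_conull hν]
  exact measure_mono fun p ⟨⟨hpx, hpy⟩, ⟨hp0x, _⟩, hp0y, _⟩ => ⟨⟨hp0x, hpx⟩, hp0y, hpy⟩

section Distances

variable [IsProbabilityMeasure ν₁] [IsProbabilityMeasure ν₂]

lemma abs_jointCDF_sub_le_dInf {x y : ℝ} (hx : x ∈ Icc (0:ℝ) 1) (hy : y ∈ Icc (0:ℝ) 1) :
    |jointCDF ν₁ x y - jointCDF ν₂ x y| ≤ dInf ν₁ ν₂ := by
  refine le_csSup ⟨1, ?_⟩ ⟨x, hx, y, hy, rfl⟩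
  rintro _ ⟨x, -, y, -, rfl⟩
  exact abs_sub_le_of_nonneg_of_le measureReal_nonneg measureReal_le_one measureReal_nonneg
    measureReal_le_one

lemma dInf_nonneg : 0 ≤ dInf ν₁ ν₂ :=
  (abs_nonneg _).trans <| abs_jointCDF_sub_le_dInf (x := 0) (y := 0)
    (left_mem_Icc.2 zero_le_one) (left_mem_Icc.2 zero_le_one)

lemma abs_jointCDF_sub_le_dInf_of_le_one (hν₁ : ν₁ unitSquareᶜ = 0) (hν₂ : ν₂ unitSquareᶜ = 0)
    {x y : ℝ} (hx : x ≤ 1) (hy : y ≤ 1) : |jointCDF ν₁ x y - jointCDF ν₂ x y| ≤ dInf ν₁ ν₂ := by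
  by_cases hneg : x < 0 ∨ y < 0
  · simp [jointCDF_eq_zero_of_neg hν₁ hneg, jointCDF_eq_zero_of_neg hν₂ hneg, dInf_nonneg]
  · push Not at hneg
    exact abs_jointCDF_sub_le_dInf ⟨hneg.1, hx⟩ ⟨hneg.2, hy⟩

lemma abs_measureReal_sub_le_dRect {x₁ x₂ y₁ y₂ : ℝ} (hx₁ : 0 ≤ x₁) (hx : x₁ ≤ x₂) (hx₂ : x₂ ≤ 1)
    (hy₁ : 0 ≤ y₁) (hy : y₁ ≤ y₂) (hy₂ : y₂ ≤ 1) :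
    |ν₁.real (Icc x₁ x₂ ×ˢ Icc y₁ y₂) - ν₂.real (Icc x₁ x₂ ×ˢ Icc y₁ y₂)| ≤ dRect ν₁ ν₂ := by
  refine le_csSup ⟨1, ?_⟩ ⟨x₁, x₂, y₁, y₂, hx₁, hx, hx₂, hy₁, hy, hy₂, rfl⟩
  rintro _ ⟨x₁, x₂, y₁, y₂, -, -, -, -, -, -, rfl⟩
  exact abs_sub_le_of_nonneg_of_le measureReal_nonneg measureReal_le_one measureReal_nonneg
    measureReal_le_one

lemma dInf_le_dRect (hν₁ : ν₁ unitSquareᶜ = 0) (hν₂ : ν₂ unitSquareᶜ = 0) :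
    dInf ν₁ ν₂ ≤ dRect ν₁ ν₂ := by
  refine csSup_le ⟨_, 0, left_mem_Icc.2 zero_le_one, 0, left_mem_Icc.2 zero_le_one, rfl⟩ ?_
  rintro _ ⟨x, hx, y, hy, rfl⟩
  rw [jointCDF_eq_measureReal_Icc_prod_Icc hν₁, jointCDF_eq_measureReal_Icc_prod_Icc hν₂]
  exact abs_measureReal_sub_le_dRect le_rfl hx.1 hx.2 le_rfl hy.1 hy.2

lemma abs_measureReal_Ioc_prod_Ioc_sub_le (hν₁ : ν₁ unitSquareᶜ = 0)
    (hν₂ : ν₂ unitSquareᶜ = 0) {x₁ x₂ y₁ y₂ : ℝ} (hx : x₁ ≤ x₂) (hx₂ : x₂ ≤ 1) (hy : y₁ ≤ y₂)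
    (hy₂ : y₂ ≤ 1) :
    |ν₁.real (Ioc x₁ x₂ ×ˢ Ioc y₁ y₂) - ν₂.real (Ioc x₁ x₂ ×ˢ Ioc y₁ y₂)| ≤ 4 * dInf ν₁ ν₂ := by
  have h22 := abs_le.1 (abs_jointCDF_sub_le_dInf_of_le_one hν₁ hν₂ hx₂ hy₂)
  have h12 := abs_le.1 (abs_jointCDF_sub_le_dInf_of_le_one hν₁ hν₂ (hx.trans hx₂) hy₂)
  have h21 := abs_le.1 (abs_jointCDF_sub_le_dInf_of_le_one hν₁ hν₂ hx₂ (hy.trans hy₂))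
  have h11 :=
    abs_le.1 (abs_jointCDF_sub_le_dInf_of_le_one hν₁ hν₂ (hx.trans hx₂) (hy.trans hy₂))
  rw [measureReal_Ioc_prod_Ioc hx hy, measureReal_Ioc_prod_Ioc hx hy, abs_le]
  constructor <;> linarith

end Distances

lemma tendsto_measureReal_Ioc_prod_Ioc [IsFiniteMeasure ν] (x₁ x₂ y₁ y₂ : ℝ) :
    Tendsto (fun r => ν.real (Ioc (x₁ - r) x₂ ×ˢ Ioc (y₁ - r) y₂)) (𝓝[>] 0)
      (𝓝 (ν.real (Icc x₁ x₂ ×ˢ Icc y₁ y₂))) := by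
  have hinter : ⋂ r > (0:ℝ), Ioc (x₁ - r) x₂ ×ˢ Ioc (y₁ - r) y₂ = Icc x₁ x₂ ×ˢ Icc y₁ y₂ := by
    ext p
    simp only [mem_iInter, mem_prod, mem_Ioc, mem_Icc]
    refine ⟨fun h => ⟨⟨?_, (h 1 one_pos).1.2⟩, ?_, (h 1 one_pos).2.2⟩, fun h r hr => ?_⟩
    · exact le_of_forall_pos_lt_add fun r hr => by linarith [(h r hr).1.1]
    · exact le_of_forall_pos_lt_add fun r hr => by linarith [(h r hr).2.1]
    · exact ⟨⟨by linarith [h.1.1], h.1.2⟩, by linarith [h.2.1], h.2.2⟩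
  rw [← hinter]
  refine (ENNReal.tendsto_toReal (measure_ne_top _ _)).comp
    (tendsto_measure_biInter_gt
      (fun _ _ => (measurableSet_Ioc.prod measurableSet_Ioc).nullMeasurableSet)
      (fun r r' _ hrr' => prod_mono (Ioc_subset_Ioc (by linarith) le_rfl)
        (Ioc_subset_Ioc (by linarith) le_rfl)) ⟨1, one_pos, measure_ne_top _ _⟩)

lemma dRect_le_four_mul_dInf [IsProbabilityMeasure ν₁] [IsProbabilityMeasure ν₂]
    (hν₁ : ν₁ unitSquareᶜ = 0) (hν₂ : ν₂ unitSquareᶜ = 0) : dRect ν₁ ν₂ ≤ 4 * dInf ν₁ ν₂ := by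
  refine csSup_le
    ⟨_, 0, 0, 0, 0, le_rfl, le_rfl, zero_le_one, le_rfl, le_rfl, zero_le_one, rfl⟩ ?_
  rintro _ ⟨x₁, x₂, y₁, y₂, -, hx, hx₂, -, hy, hy₂, rfl⟩
  refine le_of_tendsto (((tendsto_measureReal_Ioc_prod_Ioc x₁ x₂ y₁ y₂).sub
    (tendsto_measureReal_Ioc_prod_Ioc x₁ x₂ y₁ y₂)).abs) ?_
  filter_upwards [self_mem_nhdsWithin] with r (hr : 0 < r)
  exact abs_measureReal_Ioc_prod_Ioc_sub_le hν₁ hν₂ (by linarith) hx₂ (by linarith) hy₂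

lemma tendsto_dInf_iff_tendsto_dRect {νs : ℕ → Measure (ℝ × ℝ)}
    [∀ n, IsProbabilityMeasure (νs n)] [IsProbabilityMeasure ν]
    (hνs : ∀ n, νs n unitSquareᶜ = 0) (hν : ν unitSquareᶜ = 0) :
    Tendsto (fun n => dInf (νs n) ν) atTop (𝓝 0) ↔
      Tendsto (fun n => dRect (νs n) ν) atTop (𝓝 0) := by
  refine ⟨fun h => ?_, fun h => ?_⟩
  · refine squeeze_zero (fun n => dInf_nonneg.trans (dInf_le_dRect (hνs n) hν))
      (fun n => dRect_le_four_mul_dInf (hνs n) hν) ?_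
    simpa using h.const_mul 4
  · exact squeeze_zero (fun n => dInf_nonneg) (fun n => dInf_le_dRect (hνs n) hν) h

end UnitSquare

namespace IsGenPermuton

variable {lam : ℝ} {μ : Measure (ℝ × ℝ)}

lemma measure_compl_unitSquare (h : IsGenPermuton lam μ) : μ unitSquareᶜ = 0 :=
  measure_mono_null (compl_subset_compl.2 (prod_mono (Icc_subset_Icc_right h.lam_le) subset_rfl))
    h.supp

lemma margX_eq (h : IsGenPermuton lam μ) (x : ℝ) : margX μ x = max 0 (min x lam) / lam := by
  have := h.prob
  have hlam := h.lam_pos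
  have hmono : Monotone (margX μ) := fun _ _ hxy => measureReal_mono fun _ hp => hp.trans hxy
  rcases le_total x 0 with hx0 | hx0
  · have h0 := h.unif_margX 0 ⟨le_rfl, hlam.le⟩
    rw [min_eq_left (hx0.trans hlam.le), max_eq_left hx0, zero_div]
    exact le_antisymm (zero_div lam ▸ h0 ▸ hmono hx0) measureReal_nonneg
  rcases le_total x lam with hxl | hxl
  · rw [min_eq_left hxl, max_eq_right hx0, h.unif_margX x ⟨hx0, hxl⟩]
  · have h1 := h.unif_margX lam ⟨hlam.le, le_rfl⟩
    rw [div_self hlam.ne'] at h1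
    rw [min_eq_right hxl, max_eq_right hlam.le, div_self hlam.ne']
    exact le_antisymm measureReal_le_one (h1 ▸ hmono hxl)

lemma margX_sub_le (h : IsGenPermuton lam μ) {x x' : ℝ} (hx : x ≤ x') :
    margX μ x' - margX μ x ≤ (x' - x) / lam := by
  rw [h.margX_eq, h.margX_eq, ← sub_div]
  refine div_le_div_of_nonneg_right ?_ h.lam_pos.le
  simp only [max_def, min_def]
  split_ifs <;> linarith

lemma margY_min_one (h : IsGenPermuton lam μ) (y : ℝ) : margY μ (min y 1) = margY μ y := by
  have := h.prob
  rcases le_total y 1 with hy | hy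
  · rw [min_eq_left hy]
  · rw [min_eq_right hy]
    refine le_antisymm (measureReal_mono fun _ hp => hp.trans hy) ?_
    rw [margY, margY, ← measure_inter_conull h.measure_compl_unitSquare]
    exact ENNReal.toReal_mono (measure_ne_top _ _) (measure_mono fun p hp => hp.2.2.2)

lemma margY_sub_le (h : IsGenPermuton lam μ) {y y' : ℝ} (hy : 0 ≤ y) (hyy : y ≤ y') :
    margY μ y' - margY μ y ≤ (y' - y) / lam := by
  rw [← h.margY_min_one y', ← h.margY_min_one y]
  refine (h.lip_margY _ _ (le_min hy zero_le_one) (min_le_min_right _ hyy)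
    (min_le_right _ _)).trans (div_le_div_of_nonneg_right ?_ h.lam_pos.le)
  simp only [min_def]
  split_ifs <;> linarith

lemma jointCDF_sub_le {a : ℝ} (h : IsGenPermuton lam μ) (ha : 0 < a) (hal : a ≤ lam)
    {x x' y y' : ℝ} (hx : x ≤ x') (hy : 0 ≤ y) (hyy : y ≤ y') :
    jointCDF μ x' y' - jointCDF μ x y ≤ (x' - x + (y' - y)) / a := by
  have := h.prob
  calc jointCDF μ x' y' - jointCDF μ x y
      = (jointCDF μ x' y' - jointCDF μ x y') + (jointCDF μ x y' - jointCDF μ x y) := by ring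
    _ ≤ (margX μ x' - margX μ x) + (margY μ y' - margY μ y) :=
      add_le_add (jointCDF_sub_jointCDF_le_margX_sub hx y')
        (jointCDF_sub_jointCDF_le_margY_sub x hyy)
    _ ≤ (x' - x) / lam + (y' - y) / lam := add_le_add (h.margX_sub_le hx) (h.margY_sub_le hy hyy)
    _ = (x' - x + (y' - y)) / lam := by ring
    _ ≤ (x' - x + (y' - y)) / a := div_le_div_of_nonneg_left (by linarith) ha hal

end IsGenPermuton

section CornerBump

lemma norm_projIcc_zero_one_le (t : ℝ) : ‖(projIcc (0:ℝ) 1 zero_le_one t : ℝ)‖ ≤ 1 := by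
  rw [Real.norm_of_nonneg (projIcc (0:ℝ) 1 zero_le_one t).2.1]
  exact (projIcc (0:ℝ) 1 zero_le_one t).2.2

noncomputable def cornerBump (c : ℝ × ℝ) (δ : ℝ) : BoundedContinuousFunction (ℝ × ℝ) ℝ :=
  BoundedContinuousFunction.ofNormedAddCommGroup
    (fun p => (projIcc (0:ℝ) 1 zero_le_one ((c.1 + δ - p.1) / δ) : ℝ) *
      projIcc (0:ℝ) 1 zero_le_one ((c.2 + δ - p.2) / δ))
    (by fun_prop) 1
    (fun p => by
      rw [norm_mul]
      exact mul_le_one₀ (norm_projIcc_zero_one_le _) (norm_nonneg _) (norm_projIcc_zero_one_le _))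

variable {c : ℝ × ℝ} {δ : ℝ}

lemma indicator_le_cornerBump (hδ : 0 < δ) : (Iic c).indicator 1 ≤ cornerBump c δ := by
  intro p
  by_cases hp : p ∈ Iic c
  · rw [indicator_of_mem hp]
    obtain ⟨hp1, hp2⟩ : p.1 ≤ c.1 ∧ p.2 ≤ c.2 := hp
    have h1 : 1 ≤ (c.1 + δ - p.1) / δ := by rw [le_div_iff₀ hδ]; linarith
    have h2 : 1 ≤ (c.2 + δ - p.2) / δ := by rw [le_div_iff₀ hδ]; linarith
    simp [cornerBump, projIcc_of_right_le _ h1, projIcc_of_right_le _ h2]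
  · rw [indicator_of_notMem hp]
    exact mul_nonneg (projIcc _ _ _ _).2.1 (projIcc _ _ _ _).2.1

lemma cornerBump_le_indicator (hδ : 0 < δ) :
    ⇑(cornerBump c δ) ≤ (Iic (c.1 + δ, c.2 + δ)).indicator 1 := by
  intro p
  by_cases hp : p ∈ Iic (c.1 + δ, c.2 + δ)
  · rw [indicator_of_mem hp]
    exact mul_le_one₀ (projIcc _ _ _ _).2.2 (projIcc _ _ _ _).2.1 (projIcc _ _ _ _).2.2
  · rw [indicator_of_notMem hp]
    simp only [mem_Iic, Prod.le_def, not_and_or, not_le] at hp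
    rcases hp with hp | hp
    · have h1 : (c.1 + δ - p.1) / δ ≤ 0 := div_nonpos_of_nonpos_of_nonneg (by linarith) hδ.le
      simp [cornerBump, projIcc_of_le_left _ h1]
    · have h2 : (c.2 + δ - p.2) / δ ≤ 0 := div_nonpos_of_nonpos_of_nonneg (by linarith) hδ.le
      simp [cornerBump, projIcc_of_le_left _ h2]

variable {ν : Measure (ℝ × ℝ)} [IsFiniteMeasure ν]

lemma jointCDF_le_integral_cornerBump (hδ : 0 < δ) :
    jointCDF ν c.1 c.2 ≤ ∫ p, cornerBump c δ p ∂ν := by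
  change ν.real (Iic c) ≤ _
  rw [← integral_indicator_one measurableSet_Iic]
  exact integral_mono ((integrable_const 1).indicator measurableSet_Iic)
    ((cornerBump c δ).integrable ν) (indicator_le_cornerBump hδ)

lemma integral_cornerBump_le_jointCDF (hδ : 0 < δ) :
    ∫ p, cornerBump c δ p ∂ν ≤ jointCDF ν (c.1 + δ) (c.2 + δ) := by
  change _ ≤ ν.real (Iic (c.1 + δ, c.2 + δ))
  rw [← integral_indicator_one measurableSet_Iic]
  exact integral_mono ((cornerBump c δ).integrable ν)
    ((integrable_const 1).indicator measurableSet_Iic) (cornerBump_le_indicator hδ)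

end CornerBump

section DInfToWeakConv

/-- The extra row and column of cells below `0` make the cells cover the closed unit square,
whose bottom edge may carry mass. -/
def gridCell (k : ℕ) (ij : ℕ × ℕ) : Set (ℝ × ℝ) :=
  Ioc (((ij.1 : ℝ) - 1) / k) (ij.1 / k) ×ˢ Ioc (((ij.2 : ℝ) - 1) / k) (ij.2 / k)

lemma measurableSet_gridCell (k : ℕ) (ij : ℕ × ℕ) : MeasurableSet (gridCell k ij) :=
  measurableSet_Ioc.prod measurableSet_Ioc

lemma pairwise_disjoint_Ioc_grid (k : ℕ) :
    Pairwise (Disjoint on fun n : ℕ => Ioc (((n : ℝ) - 1) / k) (n / k)) := by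
  have hf : Monotone fun n : ℕ => ((n : ℝ) - 1) / k := fun m n hmn =>
    div_le_div_of_nonneg_right (sub_le_sub_right (Nat.cast_le.2 hmn) 1) k.cast_nonneg
  simpa [Order.succ_eq_add_one] using hf.pairwise_disjoint_on_Ioc_succ

lemma pairwise_disjoint_gridCell (k : ℕ) : Pairwise (Disjoint on gridCell k) := by
  rintro ⟨i, j⟩ ⟨i', j'⟩ hne
  rcases eq_or_ne i i' with rfl | hi
  · exact disjoint_prod.2
      (Or.inr (pairwise_disjoint_Ioc_grid k fun hj => hne (Prod.ext rfl hj)))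
  · exact disjoint_prod.2 (Or.inl (pairwise_disjoint_Ioc_grid k hi))

lemma exists_mem_Ioc_grid {k : ℕ} (hk : 0 < k) {t : ℝ} (ht : t ∈ Icc (0:ℝ) 1) :
    ∃ n < k + 1, t ∈ Ioc (((n : ℝ) - 1) / k) (n / k) := by
  have hk' : (0 : ℝ) < k := Nat.cast_pos.2 hk
  refine ⟨⌈t * k⌉₊, Nat.lt_succ_of_le (Nat.ceil_le.2 (mul_le_of_le_one_left hk'.le ht.2)),
    ?_, ?_⟩
  · rw [div_lt_iff₀ hk', sub_lt_iff_lt_add]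
    exact Nat.ceil_lt_add_one (mul_nonneg ht.1 hk'.le)
  · rw [le_div_iff₀ hk']
    exact Nat.le_ceil _

lemma unitSquare_subset_iUnion_gridCell {k : ℕ} (hk : 0 < k) :
    unitSquare ⊆ ⋃ ij ∈ Finset.range (k + 1) ×ˢ Finset.range (k + 1), gridCell k ij := by
  intro p hp
  obtain ⟨i, hi, hpi⟩ := exists_mem_Ioc_grid hk hp.1
  obtain ⟨j, hj, hpj⟩ := exists_mem_Ioc_grid hk hp.2
  exact mem_iUnion₂.2
    ⟨(i, j), Finset.mem_product.2 ⟨Finset.mem_range.2 hi, Finset.mem_range.2 hj⟩, hpi, hpj⟩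

lemma dist_le_of_mem_gridCell {k : ℕ} {ij : ℕ × ℕ} {p : ℝ × ℝ} (hp : p ∈ gridCell k ij) :
    dist p ((ij.1 : ℝ) / k, (ij.2 : ℝ) / k) ≤ 1 / k := by
  obtain ⟨⟨h₁, h₁'⟩, h₂, h₂'⟩ := hp
  rw [sub_div] at h₁ h₂
  rw [Prod.dist_eq, Real.dist_eq, Real.dist_eq, max_le_iff, abs_le, abs_le]
  refine ⟨⟨?_, ?_⟩, ?_, ?_⟩ <;> linarith

noncomputable def gridSum (k : ℕ) (f : ℝ × ℝ → ℝ) (ν : Measure (ℝ × ℝ)) : ℝ :=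
  ∑ ij ∈ Finset.range (k + 1) ×ˢ Finset.range (k + 1),
    f ((ij.1 : ℝ) / k, (ij.2 : ℝ) / k) * ν.real (gridCell k ij)

variable {ν : Measure (ℝ × ℝ)}

lemma integral_eq_sum_setIntegral_gridCell [IsFiniteMeasure ν] (hν : ν unitSquareᶜ = 0)
    {k : ℕ} (hk : 0 < k) {f : ℝ × ℝ → ℝ} (hf : Integrable f ν) :
    ∫ p, f p ∂ν = ∑ ij ∈ Finset.range (k + 1) ×ˢ Finset.range (k + 1),
      ∫ p in gridCell k ij, f p ∂ν := by
  rw [← integral_biUnion_finset _ (fun ij _ => measurableSet_gridCell k ij)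
    ((pairwise_disjoint_gridCell k).set_pairwise _) (fun _ _ => hf.integrableOn),
    Measure.restrict_eq_self_of_ae_mem]
  exact measure_mono_null (compl_subset_compl.2 (unitSquare_subset_iUnion_gridCell hk)) hν

lemma abs_setIntegral_gridCell_sub_le [IsFiniteMeasure ν] (hν : ν unitSquareᶜ = 0) {k : ℕ}
    {f : ℝ × ℝ → ℝ} (hf : Integrable f ν) {ε : ℝ}
    (hfε : ∀ p ∈ unitSquare, ∀ q ∈ unitSquare, dist p q ≤ 1 / k → dist (f p) (f q) ≤ ε)
    {ij : ℕ × ℕ} (hij : ij ∈ Finset.range (k + 1) ×ˢ Finset.range (k + 1)) :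
    |∫ p in gridCell k ij, f p ∂ν - f ((ij.1 : ℝ) / k, (ij.2 : ℝ) / k) * ν.real (gridCell k ij)|
      ≤ ε * ν.real (gridCell k ij) := by
  set c : ℝ × ℝ := ((ij.1 : ℝ) / k, (ij.2 : ℝ) / k)
  obtain ⟨hi, hj⟩ := Finset.mem_product.1 hij
  have hc : c ∈ unitSquare := by
    refine ⟨⟨by positivity, div_le_one_of_le₀ ?_ k.cast_nonneg⟩,
      ⟨by positivity, div_le_one_of_le₀ ?_ k.cast_nonneg⟩⟩ <;>
    exact_mod_cast Nat.lt_succ_iff.1 (Finset.mem_range.1 ‹_›)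
  have hconst : f c * ν.real (gridCell k ij) = ∫ _ in gridCell k ij, f c ∂ν := by
    rw [setIntegral_const, smul_eq_mul, mul_comm]
  rw [hconst, ← integral_sub hf.integrableOn (integrableOn_const (measure_ne_top _ _)),
    ← Real.norm_eq_abs]
  refine norm_setIntegral_le_of_norm_le_const_ae' (measure_lt_top _ _) ?_
  filter_upwards [show ∀ᵐ p ∂ν, p ∈ unitSquare from hν] with p hp hpC
  exact hfε p hp c hc (dist_le_of_mem_gridCell hpC)

lemma abs_integral_sub_gridSum_le [IsProbabilityMeasure ν] (hν : ν unitSquareᶜ = 0) {k : ℕ}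
    (hk : 0 < k) {f : ℝ × ℝ → ℝ} (hf : Integrable f ν) {ε : ℝ} (hε : 0 ≤ ε)
    (hfε : ∀ p ∈ unitSquare, ∀ q ∈ unitSquare, dist p q ≤ 1 / k → dist (f p) (f q) ≤ ε) :
    |∫ p, f p ∂ν - gridSum k f ν| ≤ ε := by
  rw [integral_eq_sum_setIntegral_gridCell hν hk hf, gridSum, ← Finset.sum_sub_distrib]
  calc _ ≤ ∑ ij ∈ Finset.range (k + 1) ×ˢ Finset.range (k + 1), ε * ν.real (gridCell k ij) :=
        (Finset.abs_sum_le_sum_abs _ _).trans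
          (Finset.sum_le_sum fun ij hij => abs_setIntegral_gridCell_sub_le hν hf hfε hij)
    _ = ε * ν.real (⋃ ij ∈ Finset.range (k + 1) ×ˢ Finset.range (k + 1), gridCell k ij) := by
      rw [measureReal_biUnion_finset ((pairwise_disjoint_gridCell k).set_pairwise _)
        (fun ij _ => measurableSet_gridCell k ij), Finset.mul_sum]
    _ ≤ ε := mul_le_of_le_one_right hε measureReal_le_one

lemma abs_gridSum_sub_gridSum_le {ν₁ ν₂ : Measure (ℝ × ℝ)} [IsProbabilityMeasure ν₁]
    [IsProbabilityMeasure ν₂] (hν₁ : ν₁ unitSquareᶜ = 0) (hν₂ : ν₂ unitSquareᶜ = 0) (k : ℕ)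
    {f : ℝ × ℝ → ℝ} {M : ℝ} (hM : ∀ p, ‖f p‖ ≤ M) :
    |gridSum k f ν₁ - gridSum k f ν₂| ≤ (k + 1) ^ 2 * (M * (4 * dInf ν₁ ν₂)) := by
  have hcell : ∀ ij ∈ Finset.range (k + 1) ×ˢ Finset.range (k + 1),
      |ν₁.real (gridCell k ij) - ν₂.real (gridCell k ij)| ≤ 4 * dInf ν₁ ν₂ := by
    intro ij hij
    obtain ⟨hi, hj⟩ := Finset.mem_product.1 hij
    refine abs_measureReal_Ioc_prod_Ioc_sub_le hν₁ hν₂ (by gcongr; linarith)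
      (div_le_one_of_le₀ ?_ k.cast_nonneg) (by gcongr; linarith)
      (div_le_one_of_le₀ ?_ k.cast_nonneg) <;>
    exact_mod_cast Nat.lt_succ_iff.1 (Finset.mem_range.1 ‹_›)
  rw [gridSum, gridSum, ← Finset.sum_sub_distrib]
  calc _ ≤ ∑ ij ∈ Finset.range (k + 1) ×ˢ Finset.range (k + 1), M * (4 * dInf ν₁ ν₂) := by
        refine (Finset.abs_sum_le_sum_abs _ _).trans (Finset.sum_le_sum fun ij hij => ?_)
        rw [← mul_sub, abs_mul, ← Real.norm_eq_abs]
        exact mul_le_mul (hM _) (hcell ij hij) (abs_nonneg _) ((norm_nonneg _).trans (hM 0))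
    _ = (k + 1) ^ 2 * (M * (4 * dInf ν₁ ν₂)) := by
      rw [Finset.sum_const, Finset.card_product, Finset.card_range, nsmul_eq_mul]
      push_cast
      ring

lemma weakConv_of_tendsto_dInf {νs : ℕ → Measure (ℝ × ℝ)} [∀ n, IsProbabilityMeasure (νs n)]
    [IsProbabilityMeasure ν] (hνs : ∀ n, νs n unitSquareᶜ = 0) (hν : ν unitSquareᶜ = 0)
    (hd : Tendsto (fun n => dInf (νs n) ν) atTop (𝓝 0)) : WeakConv νs ν := by
  intro f
  refine Metric.tendsto_nhds.2 fun ε hε => ?_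
  obtain ⟨δ, hδ, hfδ⟩ := Metric.uniformContinuousOn_iff_le.1
    ((isCompact_Icc.prod isCompact_Icc).uniformContinuousOn_of_continuous
      f.continuous.continuousOn) (ε / 4) (by positivity)
  obtain ⟨k, hk⟩ := exists_nat_gt (1 / δ)
  have hk' : (0 : ℝ) < k := lt_trans (by positivity) hk
  have hfε : ∀ p ∈ unitSquare, ∀ q ∈ unitSquare, dist p q ≤ 1 / k → dist (f p) (f q) ≤ ε / 4 :=
    fun p hp q hq hpq => hfδ p hp q hq (hpq.trans ((one_div_le hk' hδ).2 hk.le))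
  have hgrid :
      Tendsto (fun n => ((k : ℝ) + 1) ^ 2 * (‖f‖ * (4 * dInf (νs n) ν))) atTop (𝓝 0) := by
    simpa using ((hd.const_mul 4).const_mul ‖f‖).const_mul (((k : ℝ) + 1) ^ 2)
  filter_upwards [hgrid.eventually (eventually_lt_nhds (half_pos hε))] with n hn
  have hn₁ := abs_le.1 (abs_integral_sub_gridSum_le (hνs n) (Nat.cast_pos.1 hk')
    (f.integrable _) (by positivity) hfε)
  have hn₂ := abs_le.1 (abs_integral_sub_gridSum_le hν (Nat.cast_pos.1 hk')
    (f.integrable _) (by positivity) hfε)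
  have hn₃ := abs_le.1 (abs_gridSum_sub_gridSum_le (hνs n) hν k f.norm_coe_le_norm)
  rw [Real.dist_eq, abs_lt]
  constructor <;> linarith

end DInfToWeakConv

section WeakConvToDInf

lemma exists_grid_bracket {k : ℕ} (hk : 0 < k) {t : ℝ} (ht : t ∈ Icc (0:ℝ) 1) :
    ∃ i ≤ k, ∃ j ≤ k, (i : ℝ) / k ≤ t ∧ t ≤ (j : ℝ) / k ∧ (j : ℝ) / k - i / k ≤ 1 / k := by
  have hk' : (0 : ℝ) < k := Nat.cast_pos.2 hk
  have htk : t * k ≤ k := mul_le_of_le_one_left hk'.le ht.2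
  refine ⟨⌊t * k⌋₊, Nat.floor_le_of_le htk, ⌈t * k⌉₊, Nat.ceil_le.2 htk, ?_, ?_, ?_⟩
  · rw [div_le_iff₀ hk']
    exact Nat.floor_le (mul_nonneg ht.1 hk'.le)
  · rw [le_div_iff₀ hk']
    exact Nat.le_ceil _
  · rw [← sub_div]
    refine div_le_div_of_nonneg_right ?_ hk'.le
    have := Nat.ceil_le_floor_add_one (t * k)
    rw [sub_le_iff_le_add']
    exact_mod_cast this

lemma dInf_le_of_forall_grid {lam a : ℝ} {ν₁ ν₂ : Measure (ℝ × ℝ)} [IsFiniteMeasure ν₁]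
    (h₂ : IsGenPermuton lam ν₂) (ha : 0 < a) (hal : a ≤ lam) {k : ℕ} (hk : 0 < k) {ε : ℝ}
    (hε : 0 ≤ ε)
    (hgrid : ∀ i ≤ k, ∀ j ≤ k,
      |jointCDF ν₁ (i / k) (j / k) - jointCDF ν₂ (i / k) (j / k)| ≤ ε) :
    dInf ν₁ ν₂ ≤ ε + 2 / k / a := by
  refine Real.sSup_le ?_ (by positivity)
  rintro _ ⟨x, hx, y, hy, rfl⟩
  obtain ⟨i, hi, i', hi', hix, hxi', hii'⟩ := exists_grid_bracket hk hx
  obtain ⟨j, hj, j', hj', hjy, hyj', hjj'⟩ := exists_grid_bracket hk hy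
  have hup := h₂.jointCDF_sub_le ha hal hxi' hy.1 hyj'
  have hlo := h₂.jointCDF_sub_le ha hal hix (by positivity) hjy
  have htwo : (2 : ℝ) / k = 1 / k + 1 / k := by ring
  have hup' : (i' / k - x + (j' / k - y)) / a ≤ 2 / k / a :=
    div_le_div_of_nonneg_right (by linarith) ha.le
  have hlo' : (x - i / k + (y - j / k)) / a ≤ 2 / k / a :=
    div_le_div_of_nonneg_right (by linarith) ha.le
  have hgrid_up := abs_le.1 (hgrid i' hi' j' hj')
  have hgrid_lo := abs_le.1 (hgrid i hi j hj)
  have hmono_up := jointCDF_mono (ν := ν₁) hxi' hyj'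
  have hmono_lo := jointCDF_mono (ν := ν₁) hix hjy
  rw [abs_le]
  constructor <;> linarith

variable {a lam₀ : ℝ} {lam : ℕ → ℝ} {μs : ℕ → Measure (ℝ × ℝ)} {μ : Measure (ℝ × ℝ)}

lemma tendsto_jointCDF_of_weakConv (ha : 0 < a) (hlam : ∀ n, a ≤ lam n) (hlam₀ : a ≤ lam₀)
    (h : ∀ n, IsGenPermuton (lam n) (μs n)) (h₀ : IsGenPermuton lam₀ μ) (hw : WeakConv μs μ)
    (x y : ℝ) (hy : 0 ≤ y) :
    Tendsto (fun n => jointCDF (μs n) x y) atTop (𝓝 (jointCDF μ x y)) := by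
  have := h₀.prob
  refine Metric.tendsto_nhds.2 fun ε hε => ?_
  set δ := a * ε / 4 with hδ_def
  have hδ : 0 < δ := by positivity
  have hδa : δ / a = ε / 4 := by rw [hδ_def]; field_simp
  set f := cornerBump (x, y) δ
  set g := cornerBump (x - δ, y) δ
  have hf : ∫ p, f p ∂μ ≤ jointCDF μ x y + ε / 2 := by
    have hlip := h₀.jointCDF_sub_le ha hlam₀ (x' := x + δ) (y' := y + δ) (by linarith) hy
      (by linarith)
    rw [show x + δ - x + (y + δ - y) = 2 * δ by ring, mul_div_assoc, hδa] at hlip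
    linarith [integral_cornerBump_le_jointCDF (ν := μ) (c := (x, y)) hδ]
  have hg : jointCDF μ x y - ε / 4 ≤ ∫ p, g p ∂μ := by
    have hlip := h₀.jointCDF_sub_le ha hlam₀ (x := x - δ) (x' := x) (by linarith) hy le_rfl
    rw [show x - (x - δ) + (y - y) = δ by ring, hδa] at hlip
    linarith [jointCDF_le_integral_cornerBump (ν := μ) (c := (x - δ, y)) hδ]
  filter_upwards [(hw f).eventually (eventually_lt_nhds (lt_add_of_pos_right _ (half_pos hε))),
    (hw g).eventually (eventually_gt_nhds (sub_lt_self _ (half_pos hε)))] with n hfn hgn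
  have := (h n).prob
  have hupper := jointCDF_le_integral_cornerBump (ν := μs n) (c := (x, y)) hδ
  have hlower := integral_cornerBump_le_jointCDF (ν := μs n) (c := (x - δ, y)) hδ
  have hlip := (h n).jointCDF_sub_le ha (hlam n) (x := x) (y' := y + δ) le_rfl hy (by linarith)
  rw [sub_add_cancel] at hlower
  rw [show x - x + (y + δ - y) = δ by ring, hδa] at hlip
  rw [Real.dist_eq, abs_sub_lt_iff]
  constructor <;> linarith

lemma tendsto_dInf_of_weakConv (ha : 0 < a) (hlam : ∀ n, a ≤ lam n) (hlam₀ : a ≤ lam₀)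
    (h : ∀ n, IsGenPermuton (lam n) (μs n)) (h₀ : IsGenPermuton lam₀ μ) (hw : WeakConv μs μ) :
    Tendsto (fun n => dInf (μs n) μ) atTop (𝓝 0) := by
  have := h₀.prob
  have := fun n => (h n).prob
  refine tendsto_order.2 ⟨fun c hc => Eventually.of_forall fun n => hc.trans_le dInf_nonneg,
    fun η hη => ?_⟩
  obtain ⟨k, hk⟩ := exists_nat_gt (4 / (η * a))
  have hk' : (0 : ℝ) < k := lt_of_le_of_lt (by positivity) hk
  have hmesh : 2 / k / a < η / 2 := by
    rw [div_lt_iff₀ (by positivity)] at hk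
    rw [div_div, div_lt_iff₀ (by positivity)]
    linarith
  have hgrid : ∀ᶠ n in atTop, ∀ i ≤ k, ∀ j ≤ k,
      |jointCDF (μs n) (i / k) (j / k) - jointCDF μ (i / k) (j / k)| ≤ η / 4 := by
    refine (finite_Iic k).eventually_all.2 fun i _ =>
      (finite_Iic k).eventually_all.2 fun j _ => ?_
    filter_upwards [Metric.tendsto_nhds.1 (tendsto_jointCDF_of_weakConv ha hlam hlam₀ h h₀ hw
      (i / k) (j / k) (by positivity)) (η / 4) (by positivity)] with n hn
    exact (Real.dist_eq _ _ ▸ hn).le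
  filter_upwards [hgrid] with n hn
  have := dInf_le_of_forall_grid h₀ ha hlam₀ (Nat.cast_pos.1 hk') (by positivity) hn
  linarith

end WeakConvToDInf

theorem stmt8_general (a b : ℝ) (ha : 0 < a)
    (lam : ℕ → ℝ) (lam₀ : ℝ) (hmem : ∀ n, lam n ∈ Set.Icc a b) (hmem₀ : lam₀ ∈ Set.Icc a b)
    (μs : ℕ → Measure (ℝ × ℝ)) (μ : Measure (ℝ × ℝ))
    (h : ∀ n, IsGenPermuton (lam n) (μs n)) (h₀ : IsGenPermuton lam₀ μ) :
    (Filter.Tendsto (fun n => dInf (μs n) μ) Filter.atTop (nhds 0) ↔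
      Filter.Tendsto (fun n => dRect (μs n) μ) Filter.atTop (nhds 0)) ∧
    (Filter.Tendsto (fun n => dInf (μs n) μ) Filter.atTop (nhds 0) ↔ WeakConv μs μ) := by
  have := h₀.prob
  have := fun n => (h n).prob
  have hsq : ∀ n, μs n unitSquareᶜ = 0 := fun n => (h n).measure_compl_unitSquare
  exact ⟨tendsto_dInf_iff_tendsto_dRect hsq h₀.measure_compl_unitSquare,
    weakConv_of_tendsto_dInf hsq h₀.measure_compl_unitSquare,
    tendsto_dInf_of_weakConv ha (fun n => (hmem n).1) hmem₀.1 h h₀⟩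

/-- for generalized permutons, convergence in `d_∞`, in `d_□`, and
weak convergence are all equivalent. -/
theorem stmt8 (a b : ℝ) (ha : 0 < a) (hb : b ≤ 1)
    (lam : ℕ → ℝ) (lam₀ : ℝ) (hmem : ∀ n, lam n ∈ Set.Icc a b) (hmem₀ : lam₀ ∈ Set.Icc a b)
    (μs : ℕ → Measure (ℝ × ℝ)) (μ : Measure (ℝ × ℝ))
    (h : ∀ n, IsGenPermuton (lam n) (μs n)) (h₀ : IsGenPermuton lam₀ μ) :
    (Filter.Tendsto (fun n => dInf (μs n) μ) Filter.atTop (nhds 0) ↔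
      Filter.Tendsto (fun n => dRect (μs n) μ) Filter.atTop (nhds 0)) ∧
    (Filter.Tendsto (fun n => dInf (μs n) μ) Filter.atTop (nhds 0) ↔ WeakConv μs μ) :=
  stmt8_general a b ha lam lam₀ hmem hmem₀ μs μ h h₀
end

section
/- Let ν be an (n,m)-permutation (an ordered selection of m distinct elements of {1,…,n}) and let μ be the generalized permuton corresponding to ν. Then for any permutation τ ∈ S_k with k ≤ m, |t(τ, ν) − t(τ, μ)| ≤ (1/m)·C(k,2), where t(τ, ν) is the combinatorial pattern density of τ in ν and t(τ, μ) the probabilistic pattern density in μ. -/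
open MeasureTheory Set Filter
open scoped ENNReal

/-!
The measure `selPermuton n m ν` is uniform on `m` disjoint squares of mass `1/m`, the `h`-th one
in column `h` and row `ν h`. Almost surely each of `k` sample points lies in one of them, so the
sample picks a tuple of squares `c : Fin k → Fin m`, each tuple with probability `m⁻ᵏ`. Squares in
distinct columns and rows are strictly ordered in both coordinates, so for injective `c` the sample
realizes `τ` exactly when the index tuple `c` does; there are `N = k! Γ(τ, ν)` such tuples, while
the non-injective tuples have total probability `1 - m^(k)/mᵏ`, where `m^(k)` is the falling
factorial. Hence `t(τ, μ)` lies in `[N/mᵏ, N/mᵏ + 1 - m^(k)/mᵏ]`, and so does `t(τ, ν) = N/m^(k)`.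
Finally `1 - m^(k)/mᵏ ≤ C(k,2)/m`: a uniform tuple is non-injective only if one of the `C(k,2)`
pairs of its entries collides, each with probability `1/m`.
-/

open Function

section Pattern

variable {α β : Type*} {k : ℕ}

def IsPattern [Preorder α] [Preorder β] (τ : Equiv.Perm (Fin k)) (f : Fin k → α)
    (g : Fin k → β) : Prop :=
  ∃ ρ : Equiv.Perm (Fin k), StrictMono (fun i => f (ρ i)) ∧ StrictMono (fun j => g (ρ (τ⁻¹ j)))

theorem mem_patternSet_iff (τ : Equiv.Perm (Fin k)) (p : Fin k → ℝ × ℝ) :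
    p ∈ patternSet τ ↔ IsPattern τ (fun i => (p i).1) (fun i => (p i).2) :=
  Iff.rfl

theorem IsPattern.injective_left [Preorder α] [Preorder β] {τ : Equiv.Perm (Fin k)}
    {f : Fin k → α} {g : Fin k → β} (h : IsPattern τ f g) : Injective f := by
  obtain ⟨ρ, hf, -⟩ := h
  simpa [comp_def] using hf.injective.comp ρ.symm.injective

theorem isPattern_congr {α' β' : Type*} [Preorder α] [Preorder β] [Preorder α'] [Preorder β']
    {τ : Equiv.Perm (Fin k)} {f : Fin k → α} {g : Fin k → β} {f' : Fin k → α'} {g' : Fin k → β'}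
    (hf : ∀ i j, f i < f j ↔ f' i < f' j) (hg : ∀ i j, g i < g j ↔ g' i < g' j) :
    IsPattern τ f g ↔ IsPattern τ f' g' :=
  exists_congr fun _ => and_congr
    ⟨fun h _ _ hab => (hf _ _).1 (h hab), fun h _ _ hab => (hf _ _).2 (h hab)⟩
    ⟨fun h _ _ hab => (hg _ _).1 (h hab), fun h _ _ hab => (hg _ _).2 (h hab)⟩

theorem Tuple.eq_sort_of_strictMono_comp [LinearOrder α] {f : Fin k → α}
    {σ : Equiv.Perm (Fin k)} (h : StrictMono (f ∘ σ)) : σ = Tuple.sort f :=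
  Tuple.eq_sort_iff.2 ⟨h.monotone, fun _ _ hij heq => absurd heq (h hij).ne⟩

theorem isPattern_iff_sort [LinearOrder α] [Preorder β] {τ : Equiv.Perm (Fin k)}
    {f : Fin k → α} {g : Fin k → β} :
    IsPattern τ f g ↔
      StrictMono (fun i => f (Tuple.sort f i)) ∧ StrictMono (fun j => g (Tuple.sort f (τ⁻¹ j))) :=
  ⟨fun ⟨_, hf, hg⟩ => Tuple.eq_sort_of_strictMono_comp hf ▸ ⟨hf, hg⟩, fun h => ⟨_, h⟩⟩

theorem strictMono_comp_perm_inv_iff [LinearOrder β] (τ : Equiv.Perm (Fin k)) (g : Fin k → β) :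
    StrictMono (fun j => g (τ⁻¹ j)) ↔ ∀ i j, g i < g j ↔ τ i < τ j := by
  refine ⟨fun h i j => ?_, fun h a b hab => (h _ _).2 (by simpa using hab)⟩
  simpa using h.lt_iff_lt (a := τ i) (b := τ j)

variable [LinearOrder α] [LinearOrder β]

def isPatternEquiv (τ : Equiv.Perm (Fin k)) (ν : α → β) :
    {x : Fin k → α // StrictMono x ∧ ∀ i j, ν (x i) < ν (x j) ↔ τ i < τ j} ×
        Equiv.Perm (Fin k) ≃
      {c : Fin k → α // IsPattern τ c (ν ∘ c)} where
  toFun xρ := ⟨xρ.1.1 ∘ xρ.2.symm, xρ.2, by simpa using xρ.1.2.1,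
    by simpa using (strictMono_comp_perm_inv_iff τ (ν ∘ xρ.1.1)).2 xρ.1.2.2⟩
  invFun c := ⟨⟨c.1 ∘ Tuple.sort c.1, (isPattern_iff_sort.1 c.2).1,
    (strictMono_comp_perm_inv_iff τ _).1 (isPattern_iff_sort.1 c.2).2⟩, Tuple.sort c.1⟩
  left_inv xρ := by
    obtain ⟨⟨x, hx, -⟩, ρ⟩ := xρ
    have hρ : ρ = Tuple.sort (x ∘ ρ.symm) :=
      Tuple.eq_sort_of_strictMono_comp (by simpa [comp_def] using hx)
    ext <;> simp [← hρ]
  right_inv c := by ext; simp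

theorem card_isPattern (τ : Equiv.Perm (Fin k)) (ν : α → β) :
    Nat.card {c : Fin k → α // IsPattern τ c (ν ∘ c)} =
      Nat.card {x : Fin k → α // StrictMono x ∧ ∀ i j, ν (x i) < ν (x j) ↔ τ i < τ j} *
        k.factorial := by
  rw [← Nat.card_congr (isPatternEquiv τ ν), Nat.card_prod, Nat.card_perm, Nat.card_fin]

end Pattern

theorem Fintype.sum_ite_eq_card_mul {ι R : Type*} [Fintype ι] [NonAssocSemiring R]
    (p : ι → Prop) [DecidablePred p] (a : R) :
    ∑ i, (if p i then a else 0) = Fintype.card {i // p i} * a := by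
  rw [Finset.sum_ite, Finset.sum_const_zero, add_zero, Finset.sum_const, nsmul_eq_mul,
    Fintype.card_subtype]

theorem card_injective_fin (k m : ℕ) :
    Fintype.card {c : Fin k → Fin m // Injective c} = m.descFactorial k := by
  rw [Fintype.card_congr (Equiv.subtypeInjectiveEquivEmbedding _ _), Fintype.card_embedding_eq,
    Fintype.card_fin, Fintype.card_fin]

theorem card_isPattern_le_descFactorial {β : Type*} [Preorder β] {m k : ℕ}
    (τ : Equiv.Perm (Fin k)) (ν : Fin m → β) :
    Nat.card {c : Fin k → Fin m // IsPattern τ c (ν ∘ c)} ≤ m.descFactorial k := by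
  classical
  rw [← card_injective_fin, Nat.card_eq_fintype_card]
  exact Fintype.card_subtype_mono _ _ fun _ hc => hc.injective_left

theorem combDensity_eq_card_isPattern_div {n m k : ℕ} (τ : Equiv.Perm (Fin k))
    (ν : Fin m → Fin n) :
    combDensity τ ν =
      Nat.card {c : Fin k → Fin m // IsPattern τ c (ν ∘ c)} / m.descFactorial k := by
  rw [combDensity, card_isPattern, Nat.descFactorial_eq_factorial_mul_choose, Nat.cast_mul,
    Nat.cast_mul, mul_comm (k.factorial : ℝ), mul_div_mul_right _ _ (by positivity)]

theorem MeasureTheory.Measure.pi_eq_sum_inter_univ_pi {α ι κ : Type*} [MeasurableSpace α]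
    [Fintype ι] [Fintype κ] [DecidableEq κ] {μ : Measure α} [SigmaFinite μ] {s : ι → Set α}
    (hd : Pairwise (Disjoint on s)) (hs : ∀ i, MeasurableSet (s i))
    (hcover : ∀ᵐ a ∂μ, a ∈ ⋃ i, s i) (S : Set (κ → α)) :
    Measure.pi (fun _ : κ => μ) S =
      ∑ c : κ → ι, Measure.pi (fun _ : κ => μ) (S ∩ univ.pi fun j => s (c j)) := by
  have hbox (c : κ → ι) : MeasurableSet (univ.pi fun j => s (c j)) :=
    .univ_pi fun j => hs (c j)
  have hdisj : Pairwise (Disjoint on fun c : κ → ι => univ.pi fun j => s (c j)) := by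
    intro c c' hne
    obtain ⟨j, hj⟩ := ne_iff.1 hne
    exact disjoint_univ_pi.2 ⟨j, hd hj⟩
  have hae : ∀ᵐ p ∂Measure.pi (fun _ : κ => μ), p ∈ ⋃ c : κ → ι, univ.pi fun j => s (c j) := by
    simp only [iUnion_univ_pi, mem_univ_pi]
    exact Filter.eventually_all.2 fun j => Measure.tendsto_eval_ae_ae.eventually hcover
  conv_lhs => rw [← Measure.restrict_eq_self_of_ae_mem hae]
  rw [Measure.restrict_iUnion hdisj hbox, Measure.sum_apply_of_countable, tsum_fintype]
  simp_rw [Measure.restrict_apply' (hbox _)]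

def gridIco (n i : ℕ) : Set ℝ := Ico ((i : ℝ) / n) (((i : ℝ) + 1) / n)

def selSquare (n : ℕ) {m : ℕ} (ν : Fin m → Fin n) (h : Fin m) : Set (ℝ × ℝ) :=
  gridIco n h ×ˢ gridIco n (ν h)

section Grid

variable {n i j : ℕ} {x y : ℝ}

theorem lt_of_mem_gridIco (hn : 0 < n) (hx : x ∈ gridIco n i) (hy : y ∈ gridIco n j)
    (hij : i < j) : x < y := by
  have : ((i : ℝ) + 1) / n ≤ j / n := by gcongr; exact_mod_cast hij
  linarith [hx.2, hy.1]

theorem lt_iff_lt_of_mem_gridIco (hn : 0 < n) (hx : x ∈ gridIco n i) (hy : y ∈ gridIco n j)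
    (hij : i ≠ j) : x < y ↔ i < j :=
  ⟨fun hxy => hij.lt_or_gt.resolve_right fun hji => (lt_of_mem_gridIco hn hy hx hji).not_gt hxy,
    lt_of_mem_gridIco hn hx hy⟩

theorem disjoint_gridIco (hn : 0 < n) (hij : i ≠ j) : Disjoint (gridIco n i) (gridIco n j) := by
  refine disjoint_left.2 fun x hxi hxj => ?_
  rcases hij.lt_or_gt with h | h
  · exact (lt_of_mem_gridIco hn hxi hxj h).false
  · exact (lt_of_mem_gridIco hn hxj hxi h).false

theorem volume_gridIco (n i : ℕ) : volume (gridIco n i) = ENNReal.ofReal (1 / n) := by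
  rw [gridIco, Real.volume_Ico]
  congr 1
  ring

end Grid

section SelPermuton

variable {n m k : ℕ} (ν : Fin m → Fin n)

theorem measurableSet_selSquare (h : Fin m) : MeasurableSet (selSquare n ν h) :=
  measurableSet_Ico.prod measurableSet_Ico

theorem pairwise_disjoint_selSquare (hn : 0 < n) : Pairwise (Disjoint on selSquare n ν) :=
  fun _ _ hab => disjoint_prod.2 (Or.inl (disjoint_gridIco hn (Fin.val_injective.ne hab)))

theorem selPermuton_eq_smul_restrict :
    selPermuton n m ν =
      ENNReal.ofReal ((n : ℝ) ^ 2 / m) • volume.restrict (⋃ h, selSquare n ν h) := by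
  rw [selPermuton, ← withDensity_const,
    ← withDensity_indicator (.iUnion (measurableSet_selSquare ν))]
  congr 1
  funext p
  classical
  rw [indicator_apply]
  simp only [mem_iUnion, mem_prod, selSquare, gridIco, mem_Ico, and_assoc]

theorem ae_mem_iUnion_selSquare : ∀ᵐ p ∂selPermuton n m ν, p ∈ ⋃ h, selSquare n ν h := by
  rw [selPermuton_eq_smul_restrict]
  exact Measure.ae_smul_measure (ae_restrict_mem (.iUnion (measurableSet_selSquare ν))) _

theorem selPermuton_selSquare (hm : 0 < m) (hn : 0 < n) (h : Fin m) :
    selPermuton n m ν (selSquare n ν h) = (m : ℝ≥0∞)⁻¹ := by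
  rw [selPermuton_eq_smul_restrict, Measure.smul_apply, smul_eq_mul,
    Measure.restrict_apply (measurableSet_selSquare ν h),
    inter_eq_self_of_subset_left (subset_iUnion _ h), selSquare,
    Measure.volume_eq_prod, Measure.prod_prod, volume_gridIco, volume_gridIco,
    ← ENNReal.ofReal_mul (by positivity), ← ENNReal.ofReal_mul (by positivity),
    ← ENNReal.ofReal_natCast, ← ENNReal.ofReal_inv_of_pos (by positivity)]
  congr 1
  field_simp

theorem isProbabilityMeasure_selPermuton (hm : 0 < m) (hn : 0 < n) :
    IsProbabilityMeasure (selPermuton n m ν) := by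
  have hU := ae_mem_iUnion_selSquare ν
  constructor
  rw [← Measure.restrict_eq_self_of_ae_mem hU, Measure.restrict_apply_univ,
    measure_iUnion (pairwise_disjoint_selSquare ν hn) (measurableSet_selSquare ν), tsum_fintype]
  simp only [selPermuton_selSquare ν hm hn, Finset.sum_const, Finset.card_univ, Fintype.card_fin,
    nsmul_eq_mul]
  exact ENNReal.mul_inv_cancel (by exact_mod_cast hm.ne') (ENNReal.natCast_ne_top m)

theorem mem_patternSet_iff_isPattern (τ : Equiv.Perm (Fin k)) (hn : 0 < n)
    (hν : Injective ν) {c : Fin k → Fin m} (hc : Injective c) {p : Fin k → ℝ × ℝ}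
    (hp : p ∈ univ.pi fun j => selSquare n ν (c j)) :
    p ∈ patternSet τ ↔ IsPattern τ c (ν ∘ c) := by
  rw [mem_patternSet_iff]
  refine isPattern_congr (fun i j => ?_) (fun i j => ?_)
  all_goals rcases eq_or_ne i j with rfl | hij; · simp
  · exact lt_iff_lt_of_mem_gridIco hn (hp i trivial).1 (hp j trivial).1
      (Fin.val_injective.ne (hc.ne hij))
  · exact lt_iff_lt_of_mem_gridIco hn (hp i trivial).2 (hp j trivial).2
      (Fin.val_injective.ne (hν.ne (hc.ne hij)))

theorem measureReal_pi_selSquare (hm : 0 < m) (hn : 0 < n) (c : Fin k → Fin m) :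
    (Measure.pi fun _ : Fin k => selPermuton n m ν).real (univ.pi fun j => selSquare n ν (c j)) =
      ((m : ℝ) ^ k)⁻¹ := by
  have := isProbabilityMeasure_selPermuton ν hm hn
  simp [measureReal_def, Measure.pi_pi, selPermuton_selSquare ν hm hn]

open Classical in
theorem measureReal_patternSet_inter_pi_selSquare (τ : Equiv.Perm (Fin k)) (hm : 0 < m)
    (hn : 0 < n) (hν : Injective ν) {c : Fin k → Fin m} (hc : Injective c) :
    (Measure.pi fun _ : Fin k => selPermuton n m ν).real
        (patternSet τ ∩ univ.pi fun j => selSquare n ν (c j)) =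
      if IsPattern τ c (ν ∘ c) then ((m : ℝ) ^ k)⁻¹ else 0 := by
  split_ifs with hP
  · rw [inter_eq_right.2 fun p hp => (mem_patternSet_iff_isPattern ν τ hn hν hc hp).2 hP,
      measureReal_pi_selSquare ν hm hn]
  · rw [eq_empty_of_forall_notMem fun p hp => hP ((mem_patternSet_iff_isPattern ν τ hn hν hc
      (mem_of_mem_inter_right hp)).1 (mem_of_mem_inter_left hp)), measureReal_empty]

theorem patternDensity_selPermuton_eq_sum (τ : Equiv.Perm (Fin k)) (hm : 0 < m) (hn : 0 < n) :
    patternDensity τ (selPermuton n m ν) = ∑ c : Fin k → Fin m,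
      (Measure.pi fun _ : Fin k => selPermuton n m ν).real
        (patternSet τ ∩ univ.pi fun j => selSquare n ν (c j)) := by
  have := isProbabilityMeasure_selPermuton ν hm hn
  rw [patternDensity, Measure.pi_eq_sum_inter_univ_pi (pairwise_disjoint_selSquare ν hn)
    (measurableSet_selSquare ν) (ae_mem_iUnion_selSquare ν),
    ENNReal.toReal_sum fun c _ => measure_ne_top _ _]
  rfl

theorem patternDensity_selPermuton_bounds (τ : Equiv.Perm (Fin k)) (hm : 0 < m) (hn : 0 < n)
    (hν : Injective ν) :
    (Nat.card {c : Fin k → Fin m // IsPattern τ c (ν ∘ c)} : ℝ) / m ^ k ≤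
        patternDensity τ (selPermuton n m ν) ∧
      patternDensity τ (selPermuton n m ν) ≤
        (Nat.card {c : Fin k → Fin m // IsPattern τ c (ν ∘ c)} +
          ((m : ℝ) ^ k - m.descFactorial k)) / m ^ k := by
  classical
  have := isProbabilityMeasure_selPermuton ν hm hn
  set q : ℝ := ((m : ℝ) ^ k)⁻¹
  have hpat : (Nat.card {c : Fin k → Fin m // IsPattern τ c (ν ∘ c)} : ℝ) * q =
      ∑ c : Fin k → Fin m, if IsPattern τ c (ν ∘ c) then q else 0 := by
    rw [Fintype.sum_ite_eq_card_mul, Nat.card_eq_fintype_card]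
  have hinj : ((m : ℝ) ^ k - m.descFactorial k) * q =
      ∑ c : Fin k → Fin m, (q - if Injective c then q else 0) := by
    rw [Finset.sum_sub_distrib, Fintype.sum_ite_eq_card_mul, card_injective_fin]
    simp [sub_mul]
  rw [div_eq_mul_inv, div_eq_mul_inv, add_mul, hpat, hinj, ← Finset.sum_add_distrib,
    patternDensity_selPermuton_eq_sum ν τ hm hn]
  refine ⟨Finset.sum_le_sum fun c _ => ?_, Finset.sum_le_sum fun c _ => ?_⟩
  · split_ifs with hP
    · rw [measureReal_patternSet_inter_pi_selSquare ν τ hm hn hν hP.injective_left, if_pos hP]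
    · exact measureReal_nonneg
  · by_cases hc : Injective c
    · simp [measureReal_patternSet_inter_pi_selSquare ν τ hm hn hν hc, hc, q]
    · simpa [hc, mt IsPattern.injective_left hc] using
        (measureReal_mono inter_subset_right).trans_eq (measureReal_pi_selSquare ν hm hn c)

end SelPermuton

theorem Nat.pow_succ_le_mul_descFactorial_add (m k : ℕ) :
    m ^ (k + 1) ≤ m * m.descFactorial k + k.choose 2 * m ^ k := by
  induction k with
  | zero => simp
  | succ k ih =>
    have hstep : m * m.descFactorial k ≤ m.descFactorial (k + 1) + k * m ^ k := by
      rw [Nat.descFactorial_succ]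
      calc m * m.descFactorial k ≤ (m - k + k) * m.descFactorial k := by gcongr; omega
        _ = (m - k) * m.descFactorial k + k * m.descFactorial k := add_mul _ _ _
        _ ≤ (m - k) * m.descFactorial k + k * m ^ k := by
          gcongr; exact Nat.descFactorial_le_pow m k
    calc m ^ (k + 1 + 1) = m * m ^ (k + 1) := by ring
      _ ≤ m * (m * m.descFactorial k + k.choose 2 * m ^ k) := by gcongr
      _ = m * (m * m.descFactorial k) + k.choose 2 * m ^ (k + 1) := by ring
      _ ≤ m * (m.descFactorial (k + 1) + k * m ^ k) + k.choose 2 * m ^ (k + 1) := by gcongr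
      _ = m * m.descFactorial (k + 1) + (k + 1).choose 2 * m ^ (k + 1) := by
        rw [Nat.choose_succ_succ', Nat.choose_one_right]; ring

theorem pow_sub_descFactorial_div_pow_le {m : ℕ} (hm : 0 < m) (k : ℕ) :
    ((m : ℝ) ^ k - m.descFactorial k) / (m : ℝ) ^ k ≤ (k.choose 2 : ℝ) / m := by
  have h : ((m ^ (k + 1) : ℕ) : ℝ) ≤ ((m * m.descFactorial k + k.choose 2 * m ^ k : ℕ) : ℝ) := by
    exact_mod_cast Nat.pow_succ_le_mul_descFactorial_add m k
  push_cast at h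
  rw [div_le_div_iff₀ (by positivity) (by positivity)]
  linarith [pow_succ (m : ℝ) k]

theorem abs_div_sub_le_sub_div {g d M t : ℝ} (hg : 0 ≤ g) (hgd : g ≤ d) (hdM : d ≤ M)
    (hM : 0 < M) (hlow : g / M ≤ t) (hup : t ≤ (g + (M - d)) / M) :
    |g / d - t| ≤ (M - d) / M := by
  rw [add_div] at hup
  rcases (hg.trans hgd).eq_or_lt with hd | hd
  · subst hd
    obtain rfl : g = 0 := le_antisymm hgd hg
    rw [zero_div] at hlow hup
    rw [zero_div, zero_sub, abs_neg, abs_of_nonneg hlow]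
    linarith
  have hgM : g / M ≤ g / d := div_le_div_of_nonneg_left hg hd hdM
  have hgap : g / d - g / M ≤ (M - d) / M := by
    have : g / d - g / M = g / d * ((M - d) / M) := by field_simp
    rw [this]
    exact mul_le_of_le_one_left (div_nonneg (by linarith) hM.le) (div_le_one_of_le₀ hgd hd.le)
  rw [abs_sub_le_iff]
  constructor <;> linarith

theorem stmt11_general (n m k : ℕ) (hm : 0 < m)
    (ν : Fin m → Fin n) (hν : Function.Injective ν) (τ : Equiv.Perm (Fin k)) :
    |combDensity τ ν - patternDensity τ (selPermuton n m ν)| ≤ (k.choose 2 : ℝ) / m := by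
  obtain ⟨hlow, hup⟩ := patternDensity_selPermuton_bounds ν τ hm (ν ⟨0, hm⟩).pos hν
  rw [combDensity_eq_card_isPattern_div]
  calc _ ≤ ((m : ℝ) ^ k - m.descFactorial k) / (m : ℝ) ^ k :=
        abs_div_sub_le_sub_div (Nat.cast_nonneg _)
          (by exact_mod_cast card_isPattern_le_descFactorial τ ν)
          (by exact_mod_cast Nat.descFactorial_le_pow m k) (by positivity) hlow hup
    _ ≤ (k.choose 2 : ℝ) / m := pow_sub_descFactorial_div_pow_le hm k

/-- the combinatorial and probabilistic pattern densities of an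
`(n,m)`-permutation differ by at most `C(k,2)/m`. -/
theorem stmt11 (n m k : ℕ) (hm : 0 < m) (hk : k ≤ m) (hmn : m ≤ n)
    (ν : Fin m → Fin n) (hν : Function.Injective ν) (τ : Equiv.Perm (Fin k)) :
    |combDensity τ ν - patternDensity τ (selPermuton n m ν)| ≤ (k.choose 2 : ℝ) / m :=
  stmt11_general n m k hm ν hν τ
end
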